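/- arXiv:2412.14336 — 3 statements merged into one kernel-verified Lean document; each statement's English description precedes it below -/
import Mathlib

section
/- Let (M,τ) be a tracial von Neumann algebra generated by a von Neumann subalgebra B and a tuple of self-adjoint operators x=(x_i)_{i∈I}. Then x admits a (ℂ, (δ_{ij}τ)_{i,j∈I})-conjugate system if and only if the tuple x⊗1 admits a (ℂ⊗B, (δ_{ij} τ⊗1_B)_{i,j∈I})-conjugate system. -/
/- Common framework: tracial von Neumann algebras, conditional expectations,
covariance matrices, the correspondence `L²(M ⊠_η M, τ)`, the η-partial
derivative, (B,η)-conjugate systems, Popa intertwining and operator-valued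
cumulants, following the paper
"Conjugate systems relative to covariance matrices". -/

open scoped InnerProductSpace ComplexOrder

noncomputable section

variable {H : Type} [NormedAddCommGroup H] [InnerProductSpace ℂ H] [CompleteSpace H]

/-- The von Neumann algebra generated by a (star-closed) set of operators:
its double commutant. -/
def vnGen (s : Set (H →L[ℂ] H)) : Set (H →L[ℂ] H) :=
  Set.centralizer (Set.centralizer s)

/-- The center of a set of operators. -/
def centerOf (s : Set (H →L[ℂ] H)) : Set (H →L[ℂ] H) :=
  s ∩ Set.centralizer s

/-- The relative commutant `s' ∩ amb`. -/
def relComm (amb s : Set (H →L[ℂ] H)) : Set (H →L[ℂ] H) :=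
  {y ∈ amb | ∀ b ∈ s, b * y = y * b}

/-- A von Neumann algebra `M ⊆ B(H)` together with a faithful (normal) tracial state `τ`
(extended arbitrarily to all of `B(H)`). -/
structure TracialVN (H : Type) [NormedAddCommGroup H] [InnerProductSpace ℂ H]
    [CompleteSpace H] where
  M : VonNeumannAlgebra H
  τ : (H →L[ℂ] H) →ₗ[ℂ] ℂ
  τ_one : τ 1 = 1
  τ_star : ∀ a ∈ M, τ (star a) = starRingEnd ℂ (τ a)
  τ_trace : ∀ a ∈ M, ∀ b ∈ M, τ (a * b) = τ (b * a)
  τ_pos : ∀ a ∈ M, 0 ≤ τ (star a * a)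
  τ_faithful : ∀ a ∈ M, τ (star a * a) = 0 → a = 0

/-- The `τ`-norm `‖a‖_τ = τ(a^*a)^{1/2}` of an operator. -/
def TracialVN.τNorm (V : TracialVN H) (a : H →L[ℂ] H) : ℝ :=
  Real.sqrt (V.τ (star a * a)).re

/-- The (unique) `τ`-preserving faithful normal conditional expectation of `M` onto the
subalgebra with carrier set `Bs` (defined on all of `B(H)`; the relevant properties
hold on `M`). -/
structure CondExpOn (V : TracialVN H) (Bs : Set (H →L[ℂ] H)) where
  E : (H →L[ℂ] H) →ₗ[ℂ] (H →L[ℂ] H)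
  mem : ∀ a ∈ V.M, E a ∈ Bs
  fix : ∀ b ∈ Bs, E b = b
  bimod : ∀ b₁ ∈ Bs, ∀ b₂ ∈ Bs, ∀ a ∈ V.M, E (b₁ * a * b₂) = b₁ * E a * b₂
  star_map : ∀ a ∈ V.M, E (star a) = star (E a)
  pres : ∀ a ∈ V.M, V.τ (E a) = V.τ a
  faithful : ∀ a ∈ V.M, E (star a * a) = 0 → a = 0

/-- `η = (η_{ij})_{i,j∈I}` is a covariance matrix over `B` (carrier set `Bs`):
each `η_{ij}` maps `B` to `B`, `η` is `τ`-symmetric, and `η` is (completely) positive in the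
sense that the kernel associated to the extension `η ∘ E_B` of `η` to `M` is positive. -/
def IsCovariance {I : Type} (V : TracialVN H) (Bs : Set (H →L[ℂ] H))
    (EB : CondExpOn V Bs) (η : I → I → (H →L[ℂ] H) →ₗ[ℂ] (H →L[ℂ] H)) : Prop :=
  (∀ i j, ∀ b ∈ Bs, η i j b ∈ Bs) ∧
  (∀ i j, ∀ a ∈ Bs, ∀ b ∈ Bs, V.τ (η i j a * b) = V.τ (a * η j i b)) ∧
  (∀ (n : ℕ) (ks : Fin n → I) (as bs : Fin n → (H →L[ℂ] H)),
    (∀ m, as m ∈ V.M) → (∀ m, bs m ∈ Bs) →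
    0 ≤ V.τ (∑ m, ∑ m', star (bs m) * η (ks m) (ks m') (EB.E (star (as m) * as m')) * bs m'))

/-- The GNS Hilbert space `L²(M,τ)`: a complex Hilbert space `L` together with the dense
embedding `ι : M → L` satisfying `⟪ι a, ι b⟫ = τ(a^* b)`, and with the normal left and right
actions of `M`. -/
structure L2Rep (V : TracialVN H) (L : Type) [NormedAddCommGroup L]
    [InnerProductSpace ℂ L] [CompleteSpace L] where
  ι : (H →L[ℂ] H) →ₗ[ℂ] L
  inner_eq : ∀ a ∈ V.M, ∀ b ∈ V.M, ⟪ι a, ι b⟫_ℂ = V.τ (star a * b)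
  dense_image : Dense (ι '' (V.M : Set (H →L[ℂ] H)))
  /-- the left action of `M` on `L²(M,τ)` -/
  al : (H →L[ℂ] H) →ₗ[ℂ] L →ₗ[ℂ] L
  /-- the right action of `M` on `L²(M,τ)`: `ar a ζ = ζ · a` -/
  ar : (H →L[ℂ] H) →ₗ[ℂ] L →ₗ[ℂ] L
  al_ι : ∀ a ∈ V.M, ∀ b ∈ V.M, al a (ι b) = ι (a * b)
  ar_ι : ∀ a ∈ V.M, ∀ b ∈ V.M, ar a (ι b) = ι (b * a)
  al_mul : ∀ a b : H →L[ℂ] H, al (a * b) = al a ∘ₗ al b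
  ar_mul : ∀ a b : H →L[ℂ] H, ar (a * b) = ar b ∘ₗ ar a
  al_ar : ∀ (a b : H →L[ℂ] H) (ζ : L), al a (ar b ζ) = ar b (al a ζ)
  al_one : al 1 = LinearMap.id
  ar_one : ar 1 = LinearMap.id
  al_bound : ∀ a ∈ V.M, ∀ ζ : L, ‖al a ζ‖ ≤ ‖a‖ * ‖ζ‖
  ar_bound : ∀ a ∈ V.M, ∀ ζ : L, ‖ar a ζ‖ ≤ ‖a‖ * ‖ζ‖

/-- The correspondence `L²(M ⊠_η M, τ)` over `M` determined by a covariance matrix `η`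
(extended to `M` as `η ∘ E_B`, which is encoded in the inner product formula below):
a Hilbert space `K` with distinguished vectors `e i`, normal left and right `M`-actions
`kl`, `kr`, densely spanned by `{a · e i · b : a, b ∈ M, i ∈ I}`, and with
`⟪a e_i b, c e_j d⟫ = τ(b^* η_{ij}(E_B(a^* c)) d)`. -/
structure EtaCorr (V : TracialVN H) (I : Type)
    (E : (H →L[ℂ] H) →ₗ[ℂ] (H →L[ℂ] H))
    (η : I → I → (H →L[ℂ] H) →ₗ[ℂ] (H →L[ℂ] H))
    (K : Type) [NormedAddCommGroup K] [InnerProductSpace ℂ K] [CompleteSpace K] where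
  e : I → K
  kl : (H →L[ℂ] H) →ₗ[ℂ] K →ₗ[ℂ] K
  kr : (H →L[ℂ] H) →ₗ[ℂ] K →ₗ[ℂ] K
  kl_mul : ∀ a b : H →L[ℂ] H, kl (a * b) = kl a ∘ₗ kl b
  kr_mul : ∀ a b : H →L[ℂ] H, kr (a * b) = kr b ∘ₗ kr a
  kl_kr : ∀ (a b : H →L[ℂ] H) (ζ : K), kl a (kr b ζ) = kr b (kl a ζ)
  kl_one : kl 1 = LinearMap.id
  kr_one : kr 1 = LinearMap.id
  inner_gen : ∀ (i j : I), ∀ a ∈ V.M, ∀ b ∈ V.M, ∀ c ∈ V.M, ∀ d ∈ V.M,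
    ⟪kl a (kr b (e i)), kl c (kr d (e j))⟫_ℂ = V.τ (star b * η i j (E (star a * c)) * d)
  dense_span : Dense ((Submodule.span ℂ
      {ζ : K | ∃ (i : I) (a b : H →L[ℂ] H), a ∈ V.M ∧ b ∈ V.M ∧ ζ = kl a (kr b (e i))} :
      Submodule ℂ K) : Set K)
  kl_bound : ∀ a ∈ V.M, ∀ ζ : K, ‖kl a ζ‖ ≤ ‖a‖ * ‖ζ‖
  kr_bound : ∀ a ∈ V.M, ∀ ζ : K, ‖kr a ζ‖ ≤ ‖a‖ * ‖ζ‖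

variable {I : Type}

/-- The element `a · e i · b` of the correspondence. -/
def EtaCorr.gen {V : TracialVN H} {E : (H →L[ℂ] H) →ₗ[ℂ] (H →L[ℂ] H)}
    {η : I → I → (H →L[ℂ] H) →ₗ[ℂ] (H →L[ℂ] H)} {K : Type} [NormedAddCommGroup K]
    [InnerProductSpace ℂ K] [CompleteSpace K] (C : EtaCorr V I E η K)
    (a : H →L[ℂ] H) (i : I) (b : H →L[ℂ] H) : K :=
  C.kl a (C.kr b (C.e i))

/-- The *-algebra `coef⟨x⟩` of noncommutative polynomials in the tuple `x` with coefficients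
in `coef`. -/
def polyAlg (coef : Set (H →L[ℂ] H)) (x : I → (H →L[ℂ] H)) :
    Subalgebra ℂ (H →L[ℂ] H) :=
  Algebra.adjoin ℂ (coef ∪ Set.range x)

/-- The `η`-partial derivative: the derivation `∂_η : coef⟨x⟩ → L²(M ⊠_η M, τ)` with
`∂_η(x i) = e i`, `∂_η(b) = 0` for `b` in the coefficient algebra, and the Leibniz rule. -/
structure EtaDer {V : TracialVN H} {E : (H →L[ℂ] H) →ₗ[ℂ] (H →L[ℂ] H)}
    {η : I → I → (H →L[ℂ] H) →ₗ[ℂ] (H →L[ℂ] H)} {K : Type} [NormedAddCommGroup K]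
    [InnerProductSpace ℂ K] [CompleteSpace K] (C : EtaCorr V I E η K)
    (coef : Set (H →L[ℂ] H)) (x : I → (H →L[ℂ] H)) where
  D : (H →L[ℂ] H) →ₗ[ℂ] K
  D_x : ∀ i, D (x i) = C.e i
  D_coef : ∀ b ∈ coef, D b = 0
  D_leibniz : ∀ p ∈ polyAlg coef x, ∀ q ∈ polyAlg coef x,
    D (p * q) = C.kr q (D p) + C.kl p (D q)

/-- `(ξ i)_{i ∈ I}` is a `(B,η)`-conjugate system for the tuple `x`:
`⟪ξ i, p⟫_τ = ⟪e i, ∂_η p⟫` for every `p ∈ coef⟨x⟩`. -/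
def IsConjugateSystem {V : TracialVN H}
    {E : (H →L[ℂ] H) →ₗ[ℂ] (H →L[ℂ] H)}
    {η : I → I → (H →L[ℂ] H) →ₗ[ℂ] (H →L[ℂ] H)} {L K : Type}
    [NormedAddCommGroup L] [InnerProductSpace ℂ L] [CompleteSpace L]
    [NormedAddCommGroup K] [InnerProductSpace ℂ K] [CompleteSpace K]
    (L2 : L2Rep V L) (C : EtaCorr V I E η K) {coef : Set (H →L[ℂ] H)}
    {x : I → (H →L[ℂ] H)} (Der : EtaDer C coef x) (ξ : I → L) : Prop :=
  ∀ i, ∀ p ∈ polyAlg coef x, ⟪ξ i, L2.ι p⟫_ℂ = ⟪C.e i, Der.D p⟫_ℂ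

/-- Popa intertwining: "a corner of `Asub` embeds into `B` inside `amb`"
(`Asub ≺_amb B`), where `B` is the image of the trace-preserving conditional
expectation `E`.  It is expressed through the equivalent characterization of
Popa's intertwining theorem: there is NO net of unitaries `(u_k)` in `Asub`
with `‖E_B(x u_k y)‖_τ → 0` for all `x, y ∈ amb`. -/
def PopaEmbeds (V : TracialVN H) (amb Asub : Set (H →L[ℂ] H))
    (E : (H →L[ℂ] H) →ₗ[ℂ] (H →L[ℂ] H)) : Prop :=
  ¬ ∃ (ιT : Type) (l : Filter ιT), l.NeBot ∧ ∃ u : ιT → (H →L[ℂ] H),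
      (∀ k, u k ∈ Asub ∧ star (u k) * u k = 1 ∧ u k * star (u k) = 1) ∧
      (∀ x ∈ amb, ∀ y ∈ amb,
        Filter.Tendsto (fun k => V.τNorm (E (x * u k * y))) l (nhds 0))

/-- The normalizer `N_amb(Bs)` of `Bs` inside `amb`. -/
def normalizerSet (amb Bs : Set (H →L[ℂ] H)) : Set (H →L[ℂ] H) :=
  {u | u ∈ amb ∧ star u * u = 1 ∧ u * star u = 1 ∧ (fun b => u * b * star u) '' Bs = Bs}

/-- The ordered product `∏_{j ∈ s} a j` (in increasing order of indices). -/
def ordProd {n : ℕ} (s : Finset (Fin n)) (a : Fin n → (H →L[ℂ] H)) : (H →L[ℂ] H) :=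
  ((s.sort (· ≤ ·)).map a).prod

/-- The increasing enumeration of a finite set of indices. -/
def blockEnum {n : ℕ} (W : Finset (Fin n)) : Fin W.card → Fin n :=
  fun k => ↑(W.orderIsoOfFin rfl k)

/-- The "gap" after `v`: the indices greater than `v` and smaller than every element
of `W` that is greater than `v`. -/
def gapSet {n : ℕ} (W : Finset (Fin n)) (v : Fin n) : Finset (Fin n) :=
  Finset.univ.filter (fun j => v < j ∧ ∀ m ∈ W, m ≤ v ∨ j < m)

/-- `κ` is the sequence of `B`-valued cumulant functions associated to the conditional
expectation `E`, defined through the moment–cumulant formula over noncrossing partitions.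
The formula below is the standard equivalent recursion obtained by summing over the block
`W = {v_1 < … < v_s}` of the noncrossing partition containing the first letter, with the
moments of the intervening intervals absorbed into the arguments by multiplicativity:
`E(a_1 ⋯ a_{n+1}) = Σ_W κ^{(|W|)}(a_{v_1}·E(gap_1) ⊗ ⋯ ⊗ a_{v_s}·E(gap_s))`. -/
def IsCumulantSeq (V : TracialVN H) (E : (H →L[ℂ] H) →ₗ[ℂ] (H →L[ℂ] H))
    (κ : (n : ℕ) → (Fin n → (H →L[ℂ] H)) → (H →L[ℂ] H)) : Prop :=
  ∀ (n : ℕ) (a : Fin (n + 1) → (H →L[ℂ] H)), (∀ m, a m ∈ V.M) →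
    E (ordProd Finset.univ a) =
      ∑ W ∈ Finset.univ.powerset.filter (fun W : Finset (Fin (n + 1)) => (0 : Fin (n + 1)) ∈ W),
        κ W.card (fun k => a (blockEnum W k) * E (ordProd (gapSet W (blockEnum W k)) a))

end

open scoped InnerProductSpace ComplexOrder

noncomputable section

/-! The map `a ↦ a ⊗ 1` is trace-preserving, so `ι a ↦ ι (a ⊗ 1)` extends to an isometry
`U : L²(M) → L²(M ⊗̄ B)`. Because `(τ ⊗ 1_B)(a ⊗ 1) = τ(a) 1`, both sides of the conjugate-system
equations factor through `τ` on elements `(p ⊗ 1) b` with `b ∈ 1 ⊗ B`: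
`⟪U ξ, (a ⊗ 1) b⟫ = ⟪ξ, a⟫ τ(b)` and `⟪e_i, ∂(p ⊗ 1 · b)⟫ = ⟪e_i, ∂p⟫ τ(b)`.
These elements span `(ℂ ⊗ B)⟨x ⊗ 1⟩`, so `U` carries a conjugate system for `x` to one for
`x ⊗ 1`, and `U*` carries one for `x ⊗ 1` back to one for `x`. -/

section ConjugateSystems

variable {H : Type} [NormedAddCommGroup H] [InnerProductSpace ℂ H] {I : Type}

theorem polyAlg_le {coef : Set (H →L[ℂ] H)} {x : I → (H →L[ℂ] H)}
    {S : Subalgebra ℂ (H →L[ℂ] H)} (hcoef : coef ⊆ S) (hx : ∀ i, x i ∈ S) :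
    polyAlg coef x ≤ S :=
  Algebra.adjoin_le (Set.union_subset hcoef (Set.range_subset_iff.2 hx))

variable [CompleteSpace H] {V : TracialVN H} {E : (H →L[ℂ] H) →ₗ[ℂ] (H →L[ℂ] H)}
  {η : I → I → (H →L[ℂ] H) →ₗ[ℂ] (H →L[ℂ] H)} {K : Type} [NormedAddCommGroup K]
  [InnerProductSpace ℂ K] [CompleteSpace K]

theorem polyAlg_scalars_le {x : I → (H →L[ℂ] H)} (hx : ∀ i, x i ∈ V.M) :
    polyAlg (Set.range fun c : ℂ => c • (1 : H →L[ℂ] H)) x ≤ V.M.toStarSubalgebra.toSubalgebra :=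
  polyAlg_le (by rintro _ ⟨c, rfl⟩; exact Subalgebra.smul_mem _ (one_mem _) c) hx

namespace EtaCorr

variable (C : EtaCorr V I E η K)

theorem kl_kl (a b : H →L[ℂ] H) (ζ : K) : C.kl a (C.kl b ζ) = C.kl (a * b) ζ := by
  rw [C.kl_mul]; rfl

theorem kr_kr (a b : H →L[ℂ] H) (ζ : K) : C.kr b (C.kr a ζ) = C.kr (a * b) ζ := by
  rw [C.kr_mul]; rfl

theorem inner_e_kl_kr_e (i k : I) {c d : H →L[ℂ] H} (hc : c ∈ V.M) (hd : d ∈ V.M) :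
    ⟪C.e i, C.kl c (C.kr d (C.e k))⟫_ℂ = V.τ (η i k (E c) * d) := by
  have h := C.inner_gen i k 1 (one_mem _) 1 (one_mem _) c hc d hd
  rwa [C.kl_one, C.kr_one, LinearMap.id_apply, LinearMap.id_apply, star_one, one_mul,
    one_mul] at h

end EtaCorr

namespace EtaDer

variable {C : EtaCorr V I E η K} {coef : Set (H →L[ℂ] H)} {x : I → (H →L[ℂ] H)}
  (Der : EtaDer C coef x)

theorem map_one : Der.D 1 = 0 := by
  have h := Der.D_leibniz 1 (one_mem _) 1 (one_mem _)
  rw [mul_one, C.kl_one, C.kr_one, LinearMap.id_apply] at h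
  simpa using h

theorem map_smul_one (c : ℂ) : Der.D (c • 1) = 0 := by
  rw [map_smul, Der.map_one, smul_zero]

theorem map_mul_coef {p b : H →L[ℂ] H} (hp : p ∈ polyAlg coef x) (hb : b ∈ coef) :
    Der.D (p * b) = C.kr b (Der.D p) := by
  rw [Der.D_leibniz p hp b (Algebra.subset_adjoin (Or.inl hb)), Der.D_coef b hb, map_zero,
    add_zero]

end EtaDer

theorem isConjugateSystem_of_subset_span {L : Type} [NormedAddCommGroup L]
    [InnerProductSpace ℂ L] [CompleteSpace L] {L2 : L2Rep V L} {C : EtaCorr V I E η K}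
    {coef : Set (H →L[ℂ] H)} {x : I → (H →L[ℂ] H)} {Der : EtaDer C coef x} {ξ : I → L}
    {s : Set (H →L[ℂ] H)} (hs : (polyAlg coef x : Set (H →L[ℂ] H)) ⊆ Submodule.span ℂ s)
    (h : ∀ i, ∀ p ∈ s, ⟪ξ i, L2.ι p⟫_ℂ = ⟪C.e i, Der.D p⟫_ℂ) :
    IsConjugateSystem L2 C Der ξ := fun i _ hp =>
  LinearMap.eqOn_span (f := innerₛₗ ℂ (ξ i) ∘ₗ L2.ι) (g := innerₛₗ ℂ (C.e i) ∘ₗ Der.D)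
    (h i) (hs hp)

end ConjugateSystems

section Ampliation

open scoped Pointwise

variable {H H₃ : Type} [NormedAddCommGroup H] [InnerProductSpace ℂ H] [CompleteSpace H]
  [NormedAddCommGroup H₃] [InnerProductSpace ℂ H₃] [CompleteSpace H₃]

/-- `j` plays the role of the ampliation `a ↦ a ⊗ 1 : M → M ⊗̄ B`, with `B₃ = 1 ⊗ B` and
`E₃ = τ ⊗ id_B`. -/
structure IsAmpliation (V : TracialVN H) (V₃ : TracialVN H₃) (B₃ : VonNeumannAlgebra H₃)
    (E₃ : CondExpOn V₃ (B₃ : Set (H₃ →L[ℂ] H₃))) (j : (H →L[ℂ] H) → (H₃ →L[ℂ] H₃)) :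
    Prop where
  mem : ∀ a ∈ V.M, j a ∈ V₃.M
  map_add : ∀ a ∈ V.M, ∀ b ∈ V.M, j (a + b) = j a + j b
  map_smul : ∀ (c : ℂ), ∀ a ∈ V.M, j (c • a) = c • j a
  map_mul : ∀ a ∈ V.M, ∀ b ∈ V.M, j (a * b) = j a * j b
  map_star : ∀ a ∈ V.M, j (star a) = star (j a)
  map_one : j 1 = 1
  commute : ∀ a ∈ V.M, ∀ b ∈ B₃, j a * b = b * j a
  coeff_mem : ∀ b ∈ B₃, b ∈ V₃.M
  condExp_map : ∀ a ∈ V.M, E₃.E (j a) = V.τ a • 1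

namespace IsAmpliation

variable {I : Type} {V : TracialVN H} {V₃ : TracialVN H₃} {B₃ : VonNeumannAlgebra H₃}
  {E₃ : CondExpOn V₃ (B₃ : Set (H₃ →L[ℂ] H₃))} {j : (H →L[ℂ] H) → (H₃ →L[ℂ] H₃)}
  {x : I → (H →L[ℂ] H)}

theorem map_smul_one (hj : IsAmpliation V V₃ B₃ E₃ j) (c : ℂ) : j (c • 1) = c • 1 := by
  rw [hj.map_smul c 1 (one_mem _), hj.map_one]

theorem trace_map_mul (hj : IsAmpliation V V₃ B₃ E₃ j) {a : H →L[ℂ] H} {b : H₃ →L[ℂ] H₃}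
    (ha : a ∈ V.M) (hb : b ∈ B₃) : V₃.τ (j a * b) = V.τ a * V₃.τ b := by
  have hE : E₃.E (j a * b) = V.τ a • b := by
    have h := E₃.bimod 1 (one_mem B₃) b hb (j a) (hj.mem a ha)
    rwa [one_mul, one_mul, hj.condExp_map a ha, smul_mul_assoc, one_mul] at h
  rw [← E₃.pres _ (mul_mem (hj.mem a ha) (hj.coeff_mem b hb)), hE, V₃.τ.map_smul, smul_eq_mul]

theorem mem_polyAlg (hj : IsAmpliation V V₃ B₃ E₃ j) (hx : ∀ i, x i ∈ V.M) {p : H →L[ℂ] H}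
    (hp : p ∈ polyAlg (Set.range fun c : ℂ => c • (1 : H →L[ℂ] H)) x) :
    j p ∈ polyAlg (B₃ : Set (H₃ →L[ℂ] H₃)) (fun i => j (x i)) := by
  have hM := polyAlg_scalars_le hx
  induction hp using Algebra.adjoin_induction with
  | mem p hp =>
    rcases hp with ⟨c, rfl⟩ | ⟨i, rfl⟩
    · rw [hj.map_smul_one]; exact Subalgebra.smul_mem _ (one_mem _) c
    · exact Algebra.subset_adjoin (Or.inr ⟨i, rfl⟩)
  | algebraMap r =>
    rw [Algebra.algebraMap_eq_smul_one, hj.map_smul_one]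
    exact Subalgebra.smul_mem _ (one_mem _) r
  | add p q hp hq hp₃ hq₃ => rw [hj.map_add p (hM hp) q (hM hq)]; exact add_mem hp₃ hq₃
  | mul p q hp hq hp₃ hq₃ => rw [hj.map_mul p (hM hp) q (hM hq)]; exact mul_mem hp₃ hq₃

theorem polyAlg_subset_span (hj : IsAmpliation V V₃ B₃ E₃ j) (hx : ∀ i, x i ∈ V.M) :
    (polyAlg (B₃ : Set (H₃ →L[ℂ] H₃)) (fun i => j (x i)) : Set (H₃ →L[ℂ] H₃)) ⊆
      Submodule.span ℂ (Set.image2 (fun p b => j p * b)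
        (polyAlg (Set.range fun c : ℂ => c • (1 : H →L[ℂ] H)) x) B₃) := by
  set S := Set.image2 (fun p b => j p * b)
    (polyAlg (Set.range fun c : ℂ => c • (1 : H →L[ℂ] H)) x : Set (H →L[ℂ] H)) B₃
  have hM := polyAlg_scalars_le hx
  have hone : (1 : H₃ →L[ℂ] H₃) ∈ S := ⟨1, one_mem _, 1, one_mem _, by simp [hj.map_one]⟩
  have hS : S * S ⊆ S := by
    rintro _ ⟨_, ⟨p, hp, b, hb, rfl⟩, _, ⟨p', hp', b', hb', rfl⟩, rfl⟩
    refine ⟨p * p', mul_mem hp hp', b * b', mul_mem hb hb', ?_⟩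
    simp only [hj.map_mul p (hM hp) p' (hM hp'), mul_assoc, ← mul_assoc b,
      ← hj.commute p' (hM hp') b hb]
  intro q hq
  induction hq using Algebra.adjoin_induction with
  | mem q hq =>
    rcases hq with hq | ⟨i, rfl⟩
    · exact Submodule.subset_span ⟨1, one_mem _, q, hq, by simp [hj.map_one]⟩
    · exact Submodule.subset_span ⟨x i, Algebra.subset_adjoin (Or.inr ⟨i, rfl⟩), 1, one_mem _,
        mul_one _⟩
  | algebraMap r =>
    rw [Algebra.algebraMap_eq_smul_one]; exact Submodule.smul_mem _ r (Submodule.subset_span hone)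
  | add q q' _ _ hq hq' => exact add_mem hq hq'
  | mul q q' _ _ hq hq' =>
    exact Submodule.span_mono hS (Submodule.span_mul_span ℂ S S ▸ Submodule.mul_mem_mul hq hq')

variable {L L₃ : Type} [NormedAddCommGroup L] [InnerProductSpace ℂ L] [CompleteSpace L]
  [NormedAddCommGroup L₃] [InnerProductSpace ℂ L₃] [CompleteSpace L₃]
  (L2 : L2Rep V L) (L2₃ : L2Rep V₃ L₃)

theorem inner_ι_map_ι_map_mul (hj : IsAmpliation V V₃ B₃ E₃ j) {a c : H →L[ℂ] H}
    {b : H₃ →L[ℂ] H₃} (ha : a ∈ V.M) (hc : c ∈ V.M) (hb : b ∈ B₃) :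
    ⟪L2₃.ι (j a), L2₃.ι (j c * b)⟫_ℂ = ⟪L2.ι a, L2.ι c⟫_ℂ * V₃.τ b := by
  rw [L2₃.inner_eq _ (hj.mem a ha) _ (mul_mem (hj.mem c hc) (hj.coeff_mem b hb)),
    L2.inner_eq _ ha _ hc, ← hj.map_star a ha, ← mul_assoc, ← hj.map_mul _ (star_mem ha) _ hc,
    hj.trace_map_mul (mul_mem (star_mem ha) hc) hb]

theorem exists_continuousLinearMap_apply_ι (hj : IsAmpliation V V₃ B₃ E₃ j) :
    ∃ U : L →L[ℂ] L₃, ∀ a ∈ V.M, U (L2.ι a) = L2₃.ι (j a) := by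
  let M := Subalgebra.toSubmodule V.M.toStarSubalgebra.toSubalgebra
  let g : M →ₗ[ℂ] L₃ :=
    { toFun := fun a => L2₃.ι (j a)
      map_add' := fun a b => by
        simp only [Submodule.coe_add, hj.map_add a a.2 b b.2, _root_.map_add]
      map_smul' := fun c a => by
        simp only [SetLike.val_smul, hj.map_smul c a a.2, _root_.map_smul, RingHom.id_apply] }
  have hdense : DenseRange (L2.ι ∘ₗ M.subtype) := by
    rw [DenseRange, LinearMap.coe_comp, Set.range_comp, Submodule.coe_subtype,
      Subtype.range_coe]
    exact L2.dense_image
  have hnorm : ∀ a : M, ‖g a‖ ≤ 1 * ‖(L2.ι ∘ₗ M.subtype) a‖ := fun a => by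
    have h := hj.inner_ι_map_ι_map_mul L2 L2₃ a.2 a.2 (one_mem B₃)
    rw [mul_one, V₃.τ_one, mul_one] at h
    rw [one_mul, norm_eq_sqrt_re_inner (𝕜 := ℂ), norm_eq_sqrt_re_inner (𝕜 := ℂ)]
    exact (congrArg (fun z : ℂ => √z.re) h).le
  exact ⟨g.extendOfNorm _, fun a ha => LinearMap.extendOfNorm_eq hdense ⟨1, hnorm⟩ ⟨a, ha⟩⟩

theorem inner_apply_ι_map_mul (hj : IsAmpliation V V₃ B₃ E₃ j) {U : L →L[ℂ] L₃}
    (hU : ∀ a ∈ V.M, U (L2.ι a) = L2₃.ι (j a)) (ξ : L) {a : H →L[ℂ] H} {b : H₃ →L[ℂ] H₃}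
    (ha : a ∈ V.M) (hb : b ∈ B₃) :
    ⟪U ξ, L2₃.ι (j a * b)⟫_ℂ = ⟪ξ, L2.ι a⟫_ℂ * V₃.τ b := by
  have h : (fun ξ => ⟪U ξ, L2₃.ι (j a * b)⟫_ℂ) = fun ξ => ⟪ξ, L2.ι a⟫_ℂ * V₃.τ b :=
    Continuous.ext_on L2.dense_image (by fun_prop) (by fun_prop) (by
      rintro _ ⟨c, hc, rfl⟩
      simp only [hU c hc]
      exact hj.inner_ι_map_ι_map_mul L2 L2₃ hc ha hb)
  exact congrFun h ξ

variable {ηs : I → I → (H →L[ℂ] H) →ₗ[ℂ] (H →L[ℂ] H)}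
  {η₃ : I → I → (H₃ →L[ℂ] H₃) →ₗ[ℂ] (H₃ →L[ℂ] H₃)} {Ks K₃ : Type}
  [NormedAddCommGroup Ks] [InnerProductSpace ℂ Ks] [CompleteSpace Ks]
  [NormedAddCommGroup K₃] [InnerProductSpace ℂ K₃] [CompleteSpace K₃]
  {Cs : EtaCorr V I (V.τ.smulRight 1) ηs Ks} {C₃ : EtaCorr V₃ I E₃.E η₃ K₃}

theorem inner_e_kl_kr_e (hj : IsAmpliation V V₃ B₃ E₃ j)
    (hηs_diag : ∀ i, ηs i i = V.τ.smulRight 1) (hηs_off : ∀ i j, i ≠ j → ηs i j = 0)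
    (hη₃_diag : ∀ i, η₃ i i = E₃.E) (hη₃_off : ∀ i j, i ≠ j → η₃ i j = 0) (i k : I)
    {c d : H →L[ℂ] H} {b : H₃ →L[ℂ] H₃} (hc : c ∈ V.M) (hd : d ∈ V.M) (hb : b ∈ B₃) :
    ⟪C₃.e i, C₃.kl (j c) (C₃.kr (j d * b) (C₃.e k))⟫_ℂ =
      ⟪Cs.e i, Cs.kl c (Cs.kr d (Cs.e k))⟫_ℂ * V₃.τ b := by
  rw [C₃.inner_e_kl_kr_e i k (hj.mem c hc) (mul_mem (hj.mem d hd) (hj.coeff_mem b hb)),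
    Cs.inner_e_kl_kr_e i k hc hd]
  by_cases hik : i = k
  · subst hik
    rw [hη₃_diag, hηs_diag, hj.condExp_map c hc, E₃.E.map_smul, E₃.fix 1 (one_mem B₃),
      smul_mul_assoc, one_mul, V₃.τ.map_smul, smul_eq_mul, hj.trace_map_mul hd hb]
    simp [V.τ_one, mul_assoc]
  · rw [hη₃_off i k hik, hηs_off i k hik]
    simp

/-- The outer factors `j c` and `j d * b` are carried along because the Leibniz rule moves
`j p` and `j q` into them. -/
theorem inner_e_kl_kr_der (hj : IsAmpliation V V₃ B₃ E₃ j) (hx : ∀ i, x i ∈ V.M)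
    (hηs_diag : ∀ i, ηs i i = V.τ.smulRight 1) (hηs_off : ∀ i j, i ≠ j → ηs i j = 0)
    (hη₃_diag : ∀ i, η₃ i i = E₃.E) (hη₃_off : ∀ i j, i ≠ j → η₃ i j = 0)
    (Ders : EtaDer Cs (Set.range fun c : ℂ => c • (1 : H →L[ℂ] H)) x)
    (Der₃ : EtaDer C₃ (B₃ : Set (H₃ →L[ℂ] H₃)) (fun i => j (x i))) (i : I) {p : H →L[ℂ] H}
    (hp : p ∈ polyAlg (Set.range fun c : ℂ => c • (1 : H →L[ℂ] H)) x) :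
    ∀ c ∈ V.M, ∀ d ∈ V.M, ∀ b ∈ B₃,
      ⟪C₃.e i, C₃.kl (j c) (C₃.kr (j d * b) (Der₃.D (j p)))⟫_ℂ =
        ⟪Cs.e i, Cs.kl c (Cs.kr d (Ders.D p))⟫_ℂ * V₃.τ b := by
  have hM := polyAlg_scalars_le hx
  induction hp using Algebra.adjoin_induction with
  | mem p hp =>
    intro c hc d hd b hb
    rcases hp with ⟨a, rfl⟩ | ⟨k, rfl⟩
    · simp [hj.map_smul_one, Der₃.map_smul_one, Ders.map_smul_one]
    · rw [Der₃.D_x, Ders.D_x]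
      exact hj.inner_e_kl_kr_e hηs_diag hηs_off hη₃_diag hη₃_off i k hc hd hb
  | algebraMap r =>
    intro c _ d _ b _
    simp [Algebra.algebraMap_eq_smul_one, hj.map_smul_one, Der₃.map_smul_one,
      Ders.map_smul_one]
  | add p q hp hq ihp ihq =>
    intro c hc d hd b hb
    simp only [hj.map_add p (hM hp) q (hM hq), _root_.map_add, inner_add_right, add_mul,
      ihp c hc d hd b hb, ihq c hc d hd b hb]
  | mul p q hp hq ihp ihq =>
    intro c hc d hd b hb
    rw [hj.map_mul p (hM hp) q (hM hq),
      Der₃.D_leibniz _ (hj.mem_polyAlg hx hp) _ (hj.mem_polyAlg hx hq), Ders.D_leibniz _ hp _ hq]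
    simp only [_root_.map_add, inner_add_right, add_mul]
    congr 1
    · rw [C₃.kr_kr, Cs.kr_kr, ← mul_assoc, ← hj.map_mul q (hM hq) d hd]
      exact ihp c hc (q * d) (mul_mem (hM hq) hd) b hb
    · rw [← C₃.kl_kr, ← Cs.kl_kr, C₃.kl_kl, Cs.kl_kl, ← hj.map_mul c hc p (hM hp)]
      exact ihq (c * p) (mul_mem hc (hM hp)) d hd b hb

theorem inner_e_der_map_mul (hj : IsAmpliation V V₃ B₃ E₃ j) (hx : ∀ i, x i ∈ V.M)
    (hηs_diag : ∀ i, ηs i i = V.τ.smulRight 1) (hηs_off : ∀ i j, i ≠ j → ηs i j = 0)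
    (hη₃_diag : ∀ i, η₃ i i = E₃.E) (hη₃_off : ∀ i j, i ≠ j → η₃ i j = 0)
    (Ders : EtaDer Cs (Set.range fun c : ℂ => c • (1 : H →L[ℂ] H)) x)
    (Der₃ : EtaDer C₃ (B₃ : Set (H₃ →L[ℂ] H₃)) (fun i => j (x i))) (i : I) {p : H →L[ℂ] H}
    {b : H₃ →L[ℂ] H₃} (hp : p ∈ polyAlg (Set.range fun c : ℂ => c • (1 : H →L[ℂ] H)) x)
    (hb : b ∈ B₃) :
    ⟪C₃.e i, Der₃.D (j p * b)⟫_ℂ = ⟪Cs.e i, Ders.D p⟫_ℂ * V₃.τ b := by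
  have h := hj.inner_e_kl_kr_der hx hηs_diag hηs_off hη₃_diag hη₃_off Ders Der₃ i hp
    1 (one_mem _) 1 (one_mem _) b hb
  rwa [hj.map_one, one_mul, C₃.kl_one, Cs.kl_one, Cs.kr_one, LinearMap.id_apply,
    LinearMap.id_apply, LinearMap.id_apply, ← Der₃.map_mul_coef (hj.mem_polyAlg hx hp) hb] at h

theorem exists_isConjugateSystem_iff (hj : IsAmpliation V V₃ B₃ E₃ j) (hx : ∀ i, x i ∈ V.M)
    (hηs_diag : ∀ i, ηs i i = V.τ.smulRight 1) (hηs_off : ∀ i j, i ≠ j → ηs i j = 0)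
    (hη₃_diag : ∀ i, η₃ i i = E₃.E) (hη₃_off : ∀ i j, i ≠ j → η₃ i j = 0)
    (Ders : EtaDer Cs (Set.range fun c : ℂ => c • (1 : H →L[ℂ] H)) x)
    (Der₃ : EtaDer C₃ (B₃ : Set (H₃ →L[ℂ] H₃)) (fun i => j (x i))) :
    (∃ ξ : I → L, IsConjugateSystem L2 Cs Ders ξ) ↔
      (∃ ζ : I → L₃, IsConjugateSystem L2₃ C₃ Der₃ ζ) := by
  obtain ⟨U, hU⟩ := hj.exists_continuousLinearMap_apply_ι L2 L2₃
  have hM := polyAlg_scalars_le hx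
  have hD := hj.inner_e_der_map_mul hx hηs_diag hηs_off hη₃_diag hη₃_off Ders Der₃
  constructor
  · rintro ⟨ξ, hξ⟩
    refine ⟨fun i => U (ξ i), isConjugateSystem_of_subset_span (hj.polyAlg_subset_span hx) ?_⟩
    rintro i _ ⟨p, hp, b, hb, rfl⟩
    rw [hj.inner_apply_ι_map_mul L2 L2₃ hU _ (hM hp) hb, hξ i p hp, hD i hp hb]
  · rintro ⟨ζ, hζ⟩
    refine ⟨fun i => U.adjoint (ζ i), fun i p hp => ?_⟩
    have h := hD i hp (one_mem B₃)
    rw [mul_one, V₃.τ_one, mul_one] at h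
    rw [U.adjoint_inner_left, hU p (hM hp), hζ i _ (hj.mem_polyAlg hx hp), h]

end IsAmpliation

end Ampliation

theorem statement7_general
    {H H₃ : Type}
    [NormedAddCommGroup H] [InnerProductSpace ℂ H] [CompleteSpace H]
    [NormedAddCommGroup H₃] [InnerProductSpace ℂ H₃] [CompleteSpace H₃]
    {I : Type}
    -- `(M, τ)` generated by `B` and the self-adjoint tuple `x` :
    (V : TracialVN H) (B : VonNeumannAlgebra H)
    (x : I → (H →L[ℂ] H)) (hxM : ∀ i, x i ∈ V.M)
    -- the scalar covariance matrix `(δ_{ij} τ)_{i,j}` over `ℂ·1`, whose extension to `M`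
    -- is `(δ_{ij} τ(·)1)`; `L²(M ⊠ M)` and `∂` for it :
    (ηs : I → I → (H →L[ℂ] H) →ₗ[ℂ] (H →L[ℂ] H))
    (hηs_diag : ∀ i, ηs i i = V.τ.smulRight 1)
    (hηs_off : ∀ i j, i ≠ j → ηs i j = 0)
    {L Ks : Type} [NormedAddCommGroup L] [InnerProductSpace ℂ L] [CompleteSpace L]
    [NormedAddCommGroup Ks] [InnerProductSpace ℂ Ks] [CompleteSpace Ks]
    (L2 : L2Rep V L) (Cs : EtaCorr V I (V.τ.smulRight 1) ηs Ks)
    (Ders : EtaDer Cs (Set.range (fun c : ℂ => c • (1 : H →L[ℂ] H))) x)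
    -- the von Neumann tensor product `M ⊗̄ B` with trace `τ ⊗ τ|_B` and the two
    -- commuting embeddings `jM`, `jB` :
    (V₃ : TracialVN H₃)
    (jM jB : (H →L[ℂ] H) → (H₃ →L[ℂ] H₃))
    (hjM_mem : ∀ a ∈ V.M, jM a ∈ V₃.M)
    (hjM_add : ∀ a ∈ V.M, ∀ b ∈ V.M, jM (a + b) = jM a + jM b)
    (hjM_smul : ∀ (c : ℂ), ∀ a ∈ V.M, jM (c • a) = c • jM a)
    (hjM_mul : ∀ a ∈ V.M, ∀ b ∈ V.M, jM (a * b) = jM a * jM b)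
    (hjM_star : ∀ a ∈ V.M, jM (star a) = star (jM a))
    (hjM_one : jM 1 = 1)
    (hjB_one : jB 1 = 1)
    (hcomm : ∀ a ∈ V.M, ∀ b ∈ B, jM a * jB b = jB b * jM a)
    (hgen₃ : (V₃.M : Set (H₃ →L[ℂ] H₃)) =
      vnGen (jM '' (V.M : Set (H →L[ℂ] H)) ∪ jB '' (B : Set (H →L[ℂ] H))))
    -- the coefficient subalgebra `ℂ ⊗ B = 1 ⊗ B` :
    (B₃ : VonNeumannAlgebra H₃)
    (hB₃ : (B₃ : Set (H₃ →L[ℂ] H₃)) = vnGen (jB '' (B : Set (H →L[ℂ] H))))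
    -- the conditional expectation `τ ⊗ 1_B` onto `ℂ ⊗ B` :
    (E₃ : CondExpOn V₃ (B₃ : Set (H₃ →L[ℂ] H₃)))
    (hE₃ : ∀ a ∈ V.M, ∀ b ∈ B, E₃.E (jM a * jB b) = V.τ a • jB b)
    -- the covariance matrix `(δ_{ij} τ ⊗ 1_B)_{i,j}`, extended to `M ⊗̄ B`
    -- as `(δ_{ij} (τ ⊗ 1_B))` :
    (η₃ : I → I → (H₃ →L[ℂ] H₃) →ₗ[ℂ] (H₃ →L[ℂ] H₃))
    (hη₃_diag : ∀ i, η₃ i i = E₃.E)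
    (hη₃_off : ∀ i j, i ≠ j → η₃ i j = 0)
    {L₃ K₃ : Type} [NormedAddCommGroup L₃] [InnerProductSpace ℂ L₃] [CompleteSpace L₃]
    [NormedAddCommGroup K₃] [InnerProductSpace ℂ K₃] [CompleteSpace K₃]
    (L2₃ : L2Rep V₃ L₃) (C₃ : EtaCorr V₃ I E₃.E η₃ K₃)
    -- the derivation for the tuple `x ⊗ 1 = (jM (x i))` over `ℂ ⊗ B` :
    (Der₃ : EtaDer C₃ (B₃ : Set (H₃ →L[ℂ] H₃)) (fun i => jM (x i))) :
    (∃ ξ : I → L, IsConjugateSystem L2 Cs Ders ξ) ↔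
      (∃ ζ : I → L₃, IsConjugateSystem L2₃ C₃ Der₃ ζ) := by
  have hj : IsAmpliation V V₃ B₃ E₃ jM :=
    { mem := hjM_mem
      map_add := hjM_add
      map_smul := hjM_smul
      map_mul := hjM_mul
      map_star := hjM_star
      map_one := hjM_one
      commute := fun a ha b hb => by
        rw [← SetLike.mem_coe, hB₃] at hb
        refine Set.mem_centralizer_iff.mp hb (jM a) ?_
        rintro _ ⟨b₀, hb₀, rfl⟩
        exact (hcomm a ha b₀ hb₀).symm
      coeff_mem := fun b hb => by
        rw [← SetLike.mem_coe, hB₃] at hb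
        rw [← SetLike.mem_coe, hgen₃]
        exact Set.centralizer_subset (Set.centralizer_subset Set.subset_union_right) hb
      condExp_map := fun a ha => by simpa [hjB_one] using hE₃ a ha 1 (one_mem B) }
  exact hj.exists_isConjugateSystem_iff L2 L2₃ hxM hηs_diag hηs_off hη₃_diag hη₃_off Ders Der₃

theorem statement7
    {H H₃ : Type}
    [NormedAddCommGroup H] [InnerProductSpace ℂ H] [CompleteSpace H]
    [NormedAddCommGroup H₃] [InnerProductSpace ℂ H₃] [CompleteSpace H₃]
    {I : Type} [Countable I]
    -- `(M, τ)` generated by `B` and the self-adjoint tuple `x` :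
    (V : TracialVN H) (B : VonNeumannAlgebra H)
    (hBM : (B : Set (H →L[ℂ] H)) ⊆ (V.M : Set (H →L[ℂ] H)))
    (x : I → (H →L[ℂ] H)) (hxM : ∀ i, x i ∈ V.M) (hxsa : ∀ i, IsSelfAdjoint (x i))
    (hgen : (V.M : Set (H →L[ℂ] H)) = vnGen ((B : Set (H →L[ℂ] H)) ∪ Set.range x))
    -- the scalar covariance matrix `(δ_{ij} τ)_{i,j}` over `ℂ·1`, whose extension to `M`
    -- is `(δ_{ij} τ(·)1)`; `L²(M ⊠ M)` and `∂` for it :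
    (ηs : I → I → (H →L[ℂ] H) →ₗ[ℂ] (H →L[ℂ] H))
    (hηs_diag : ∀ i, ηs i i = V.τ.smulRight 1)
    (hηs_off : ∀ i j, i ≠ j → ηs i j = 0)
    {L Ks : Type} [NormedAddCommGroup L] [InnerProductSpace ℂ L] [CompleteSpace L]
    [NormedAddCommGroup Ks] [InnerProductSpace ℂ Ks] [CompleteSpace Ks]
    (L2 : L2Rep V L) (Cs : EtaCorr V I (V.τ.smulRight 1) ηs Ks)
    (Ders : EtaDer Cs (Set.range (fun c : ℂ => c • (1 : H →L[ℂ] H))) x)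
    -- the von Neumann tensor product `M ⊗̄ B` with trace `τ ⊗ τ|_B` and the two
    -- commuting embeddings `jM`, `jB` :
    (V₃ : TracialVN H₃)
    (jM jB : (H →L[ℂ] H) → (H₃ →L[ℂ] H₃))
    (hjM_mem : ∀ a ∈ V.M, jM a ∈ V₃.M)
    (hjM_add : ∀ a ∈ V.M, ∀ b ∈ V.M, jM (a + b) = jM a + jM b)
    (hjM_smul : ∀ (c : ℂ), ∀ a ∈ V.M, jM (c • a) = c • jM a)
    (hjM_mul : ∀ a ∈ V.M, ∀ b ∈ V.M, jM (a * b) = jM a * jM b)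
    (hjM_star : ∀ a ∈ V.M, jM (star a) = star (jM a))
    (hjM_one : jM 1 = 1)
    (hjB_mem : ∀ b ∈ B, jB b ∈ V₃.M)
    (hjB_add : ∀ a ∈ B, ∀ b ∈ B, jB (a + b) = jB a + jB b)
    (hjB_smul : ∀ (c : ℂ), ∀ b ∈ B, jB (c • b) = c • jB b)
    (hjB_mul : ∀ a ∈ B, ∀ b ∈ B, jB (a * b) = jB a * jB b)
    (hjB_star : ∀ b ∈ B, jB (star b) = star (jB b))
    (hjB_one : jB 1 = 1)
    (hcomm : ∀ a ∈ V.M, ∀ b ∈ B, jM a * jB b = jB b * jM a)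
    (hgen₃ : (V₃.M : Set (H₃ →L[ℂ] H₃)) =
      vnGen (jM '' (V.M : Set (H →L[ℂ] H)) ∪ jB '' (B : Set (H →L[ℂ] H))))
    (htrace₃ : ∀ a ∈ V.M, ∀ b ∈ B, V₃.τ (jM a * jB b) = V.τ a * V.τ b)
    -- the coefficient subalgebra `ℂ ⊗ B = 1 ⊗ B` :
    (B₃ : VonNeumannAlgebra H₃)
    (hB₃ : (B₃ : Set (H₃ →L[ℂ] H₃)) = vnGen (jB '' (B : Set (H →L[ℂ] H))))
    -- the conditional expectation `τ ⊗ 1_B` onto `ℂ ⊗ B` :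
    (E₃ : CondExpOn V₃ (B₃ : Set (H₃ →L[ℂ] H₃)))
    (hE₃ : ∀ a ∈ V.M, ∀ b ∈ B, E₃.E (jM a * jB b) = V.τ a • jB b)
    -- the covariance matrix `(δ_{ij} τ ⊗ 1_B)_{i,j}`, extended to `M ⊗̄ B`
    -- as `(δ_{ij} (τ ⊗ 1_B))` :
    (η₃ : I → I → (H₃ →L[ℂ] H₃) →ₗ[ℂ] (H₃ →L[ℂ] H₃))
    (hcov₃ : IsCovariance V₃ (B₃ : Set (H₃ →L[ℂ] H₃)) E₃ η₃)
    (hη₃_diag : ∀ i, η₃ i i = E₃.E)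
    (hη₃_off : ∀ i j, i ≠ j → η₃ i j = 0)
    {L₃ K₃ : Type} [NormedAddCommGroup L₃] [InnerProductSpace ℂ L₃] [CompleteSpace L₃]
    [NormedAddCommGroup K₃] [InnerProductSpace ℂ K₃] [CompleteSpace K₃]
    (L2₃ : L2Rep V₃ L₃) (C₃ : EtaCorr V₃ I E₃.E η₃ K₃)
    -- the derivation for the tuple `x ⊗ 1 = (jM (x i))` over `ℂ ⊗ B` :
    (Der₃ : EtaDer C₃ (B₃ : Set (H₃ →L[ℂ] H₃)) (fun i => jM (x i))) :
    (∃ ξ : I → L, IsConjugateSystem L2 Cs Ders ξ) ↔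
      (∃ ζ : I → L₃, IsConjugateSystem L2₃ C₃ Der₃ ζ) :=
  statement7_general V B x hxM ηs hηs_diag hηs_off L2 Cs Ders V₃ jM jB hjM_mem hjM_add hjM_smul
    hjM_mul hjM_star hjM_one hjB_one hcomm hgen₃ B₃ hB₃ E₃ hE₃ η₃ hη₃_diag hη₃_off L2₃ C₃ Der₃

end
end

section
/- Let s=(s_i)_{i∈I} be a B-valued semicircular family with covariance η inside (Φ(B,η), τ∘E_B) for a τ-symmetric covariance matrix η on B. Then s is a (B,η)-conjugate system for itself: ⟨s_i, p⟩_τ = ⟨e_i, ∂_η(p)⟩ for every i∈I and every p ∈ B⟨s⟩. -/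
/- Common framework: tracial von Neumann algebras, conditional expectations,
covariance matrices, the correspondence `L²(M ⊠_η M, τ)`, the η-partial
derivative, (B,η)-conjugate systems, Popa intertwining and operator-valued
cumulants, following the paper
"Conjugate systems relative to covariance matrices". -/

open scoped InnerProductSpace ComplexOrder

noncomputable section

/-! `B⟨s⟩` is spanned by words `b₀ s_{j₁} c₁ ⋯ s_{jₙ} cₙ` with coefficients in `B`, and both sides
of the conjugate-system identity are linear in `p`. For such a word the Leibniz rule gives
`⟨e_i, ∂_η p⟩ = Σ_k τ(η_{i jₖ}(E_B(b₀ s_{j₁} ⋯ c_{k-1})) cₖ s_{j_{k+1}} ⋯ cₙ)`.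

The same sum computes `τ(s_i p) = τ(E_B(s_i p))`. Write `s_i p` as a product of "sandwiched"
letters `bₘ s_{jₘ} cₘ` and expand `E_B` by the moment–cumulant recursion: every cumulant of
sandwiched letters vanishes except the second one, `κ₂(b s_i c, b' s_j c') = b η_{ij}(c b') c'`,
so only the blocks pairing the first letter with another one survive. The vanishing is proved by
strong induction on the length, comparing the recursion for the tuple with the recursion for its
left-normalised form `(s_{j₀}, c₀ b₁ s_{j₁}, …, c_{n-1} bₙ s_{jₙ})`, whose top cumulant vanishes by
assumption and whose product differs from the original one only by the outer factors `b₀`, `cₙ`. -/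

namespace List

theorem mem_take_finRange {n u : ℕ} {x : Fin n} :
    x ∈ (finRange n).take u ↔ (x : ℕ) < u := by
  simp only [mem_iff_getElem, getElem_take, getElem_finRange, length_take,
    length_finRange, Fin.ext_iff, Fin.val_cast]
  constructor
  · rintro ⟨i, hi, h⟩; omega
  · intro h; exact ⟨x, by omega, rfl⟩

theorem mem_drop_finRange {n u : ℕ} {x : Fin n} :
    x ∈ (finRange n).drop u ↔ u ≤ (x : ℕ) := by
  simp only [mem_iff_getElem, getElem_drop, getElem_finRange, length_drop,
    length_finRange, Fin.ext_iff, Fin.val_cast]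
  constructor
  · rintro ⟨i, hi, h⟩; omega
  · intro h; exact ⟨x - u, by omega, by omega⟩

section Telescope

variable {M : Type*} [Monoid M] {n : ℕ} {x x' : Fin n → M} {c : Fin (n + 1) → M}

theorem mul_prod_take_ofFn (h : ∀ k, c k.castSucc * x k = x' k * c k.succ) (u : Fin (n + 1)) :
    c 0 * ((ofFn x).take u).prod = ((ofFn x').take u).prod * c u := by
  induction u using Fin.induction with
  | zero => simp
  | succ k ih =>
    rw [Fin.val_castSucc] at ih
    rw [Fin.val_succ, prod_take_succ _ _ (by simp), prod_take_succ _ _ (by simp), ← mul_assoc, ih,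
      List.getElem_ofFn, List.getElem_ofFn, mul_assoc, h, mul_assoc]

theorem mul_prod_drop_ofFn (h : ∀ k, c k.castSucc * x k = x' k * c k.succ) (u : Fin (n + 1)) :
    c u * ((ofFn x).drop u).prod = ((ofFn x').drop u).prod * c (Fin.last n) := by
  induction u using Fin.reverseInduction with
  | last => simp [drop_of_length_le]
  | cast k ih =>
    rw [Fin.val_succ] at ih
    rw [Fin.val_castSucc, drop_eq_getElem_cons (l := ofFn x) (by simp),
      drop_eq_getElem_cons (l := ofFn x') (by simp), prod_cons, prod_cons, List.getElem_ofFn,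
      List.getElem_ofFn, ← mul_assoc, h, mul_assoc, ih, mul_assoc]

end Telescope

end List

theorem Fin.sort_Ioo_zero_succ {n : ℕ} (u : Fin n) :
    (Finset.Ioo 0 u.succ).sort (· ≤ ·) = ((List.finRange n).take u).map Fin.succ := by
  refine (Finset.sortedLT_sort _).eq_of_mem_iff (List.Pairwise.sortedLT ?_) fun x => ?_
  · exact List.pairwise_map.2 (((List.sortedLT_finRange n).pairwise.sublist
      (List.take_sublist _ _)).imp Fin.succ_lt_succ_iff.2)
  · induction x using Fin.cases with
    | zero =>
      refine iff_of_false (by simp) fun h => ?_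
      obtain ⟨x, -, hx⟩ := List.mem_map.mp h
      exact Fin.succ_ne_zero x hx
    | succ x =>
      rw [Finset.mem_sort, Finset.mem_Ioo, List.mem_map_of_injective (Fin.succ_injective n),
        List.mem_take_finRange, Fin.succ_lt_succ_iff, Fin.lt_def]
      exact and_iff_right (Fin.succ_pos x)

theorem Fin.sort_Ioi_succ {n : ℕ} (u : Fin n) :
    (Finset.Ioi u.succ).sort (· ≤ ·) = ((List.finRange n).drop (u + 1)).map Fin.succ := by
  refine (Finset.sortedLT_sort _).eq_of_mem_iff (List.Pairwise.sortedLT ?_) fun x => ?_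
  · exact List.pairwise_map.2 (((List.sortedLT_finRange n).pairwise.sublist
      (List.drop_sublist _ _)).imp Fin.succ_lt_succ_iff.2)
  · induction x using Fin.cases with
    | zero =>
      refine iff_of_false (by simp) fun h => ?_
      obtain ⟨x, -, hx⟩ := List.mem_map.mp h
      exact Fin.succ_ne_zero x hx
    | succ x =>
      rw [Finset.mem_sort, Finset.mem_Ioi, List.mem_map_of_injective (Fin.succ_injective n),
        List.mem_drop_finRange, Fin.succ_lt_succ_iff, Fin.lt_def]
      exact Nat.lt_iff_add_one_le

theorem apply_eq_apply_of_fin_cast {α β : Type*} (F : (n : ℕ) → (Fin n → α) → β) {m k : ℕ}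
    (h : m = k) {f : Fin m → α} {g : Fin k → α} (hfg : ∀ j, f (Fin.cast h.symm j) = g j) :
    F m f = F k g := by
  subst h
  exact congrArg (F m) (funext hfg)

theorem gapSet_univ {n : ℕ} (v : Fin n) : gapSet Finset.univ v = ∅ := by
  ext j
  simp only [gapSet, Finset.mem_filter, Finset.notMem_empty, iff_false]
  rintro ⟨-, hvj, h⟩
  exact (h j (Finset.mem_univ j)).elim (not_lt.2 · hvj) (lt_irrefl j)

theorem gapSet_pair_zero {n : ℕ} {v : Fin (n + 1)} (hv : v ≠ 0) :
    gapSet {0, v} 0 = Finset.Ioo 0 v := by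
  ext j
  simp only [gapSet, Finset.mem_filter, Finset.mem_univ, true_and, Finset.mem_insert,
    Finset.mem_singleton, forall_eq_or_imp, forall_eq, true_or, Finset.mem_Ioo,
    Fin.le_zero_iff, hv, false_or]

theorem gapSet_pair_right {n : ℕ} (v : Fin (n + 1)) : gapSet {0, v} v = Finset.Ioi v := by
  ext j
  simp only [gapSet, Finset.mem_filter, Finset.mem_univ, true_and, Finset.mem_insert,
    Finset.mem_singleton, forall_eq_or_imp, forall_eq, le_refl, Fin.zero_le, true_or, and_true,
    Finset.mem_Ioi]

theorem blockEnum_univ {n : ℕ} (h : (Finset.univ : Finset (Fin n)).card = n) (j : Fin n) :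
    blockEnum Finset.univ (Fin.cast h.symm j) = j := by
  have hf : (fun k => Fin.cast h k) = Finset.univ.orderEmbOfFin rfl :=
    Finset.orderEmbOfFin_unique rfl (fun _ => Finset.mem_univ _) (Fin.castOrderIso h).strictMono
  change Finset.univ.orderEmbOfFin rfl (Fin.cast h.symm j) = j
  rw [← hf]
  rfl

theorem blockEnum_pair_zero {n : ℕ} {v : Fin (n + 1)}
    (h : ({0, v} : Finset (Fin (n + 1))).card = 2) :
    blockEnum {0, v} (Fin.cast h.symm 0) = 0 := by
  simp only [blockEnum, Finset.coe_orderIsoOfFin_apply]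
  rw [show Fin.cast h.symm 0 = ⟨0, by omega⟩ from rfl, Finset.orderEmbOfFin_zero _ (by omega)]
  exact le_antisymm (Finset.min'_le _ _ (Finset.mem_insert_self _ _)) (Fin.zero_le _)

theorem blockEnum_pair_one {n : ℕ} {v : Fin (n + 1)}
    (h : ({0, v} : Finset (Fin (n + 1))).card = 2) :
    blockEnum {0, v} (Fin.cast h.symm 1) = v := by
  simp only [blockEnum, Finset.coe_orderIsoOfFin_apply]
  rw [show Fin.cast h.symm 1 = ⟨({0, v} : Finset (Fin (n + 1))).card - 1, by omega⟩ from
    Fin.ext (by simp [h]), Finset.orderEmbOfFin_last _ (by omega)]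
  exact le_antisymm (Finset.max'_le _ _ _ (by simp)) (Finset.le_max' _ _ (by simp))

theorem Finset.exists_eq_pair_zero_succ {n : ℕ} {W : Finset (Fin (n + 1))} (h0 : 0 ∈ W)
    (h2 : W.card = 2) : ∃ u : Fin n, W = {0, u.succ} := by
  obtain ⟨v, hv⟩ := Finset.card_eq_one.mp (by rw [Finset.card_erase_of_mem h0, h2] :
    (W.erase 0).card = 1)
  have hv0 : v ≠ 0 := Finset.ne_of_mem_erase (hv ▸ Finset.mem_singleton_self v)
  obtain ⟨u, rfl⟩ := Fin.exists_succ_eq.mpr hv0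
  exact ⟨u, by rw [← Finset.insert_erase h0, hv]⟩

theorem Finset.sum_filter_zero_mem_eq_add_sum_pairs {M : Type*} [AddCommMonoid M] {n : ℕ}
    (hn : 2 ≤ n) (t : Finset (Fin (n + 1)) → M)
    (ht : ∀ W, 0 ∈ W → W ≠ univ → W.card ≠ 2 → t W = 0) :
    ∑ W ∈ univ.powerset.filter (fun W : Finset (Fin (n + 1)) => 0 ∈ W), t W =
      t univ + ∑ u : Fin n, t {0, u.succ} := by
  have hinj : Set.InjOn (fun u : Fin n => ({0, u.succ} : Finset (Fin (n + 1))))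
      (univ : Finset (Fin n)) := by
    intro u _ w _ h
    have hu : u.succ ∈ ({0, w.succ} : Finset (Fin (n + 1))) := by
      rw [← show ({0, u.succ} : Finset (Fin (n + 1))) = {0, w.succ} from h]; simp
    simpa [Fin.succ_ne_zero] using hu
  have huniv : univ ∉ univ.image fun u : Fin n => ({0, u.succ} : Finset (Fin (n + 1))) := by
    simp only [mem_image, mem_univ, true_and, not_exists]
    intro u h
    have := congrArg card h
    rw [card_pair (Fin.succ_ne_zero u).symm, card_univ, Fintype.card_fin] at this
    omega
  rw [← sum_image hinj, ← sum_insert huniv]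
  refine (sum_subset (fun W hW => ?_) fun W hW hW' => ?_).symm
  · refine mem_filter.mpr ⟨mem_powerset.mpr (subset_univ W), ?_⟩
    obtain rfl | ⟨u, -, rfl⟩ := mem_insert.mp hW |>.imp_right mem_image.mp
    · exact mem_univ 0
    · exact mem_insert_self _ _
  · rw [mem_insert, not_or, mem_image, not_exists] at hW'
    refine ht W (mem_filter.mp hW).2 hW'.1 fun h2 => ?_
    obtain ⟨u, rfl⟩ := exists_eq_pair_zero_succ (mem_filter.mp hW).2 h2
    exact hW'.2 u ⟨mem_univ u, rfl⟩

section

variable {H : Type} [NormedAddCommGroup H] [InnerProductSpace ℂ H] {I : Type}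

local notation "𝓛" => (H →L[ℂ] H)

theorem ordProd_univ {n : ℕ} (a : Fin n → 𝓛) : ordProd Finset.univ a = (List.ofFn a).prod := by
  rw [ordProd, Fin.sort_univ, ← List.ofFn_eq_map]

theorem ordProd_empty {n : ℕ} (a : Fin n → 𝓛) : ordProd ∅ a = 1 := by
  simp [ordProd]

theorem ordProd_mem {S : Type*} [SetLike S 𝓛] [SubmonoidClass S 𝓛] (W : S) {n : ℕ}
    (T : Finset (Fin n)) {a : Fin n → 𝓛} (ha : ∀ k, a k ∈ W) : ordProd T a ∈ W :=
  list_prod_mem fun _ hx => by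
    obtain ⟨j, -, rfl⟩ := List.mem_map.mp hx
    exact ha j

theorem ordProd_Ioo_zero_succ {n : ℕ} (a : Fin (n + 1) → 𝓛) (u : Fin n) :
    ordProd (Finset.Ioo 0 u.succ) a = ((List.ofFn fun k => a k.succ).take u).prod := by
  rw [ordProd, Fin.sort_Ioo_zero_succ, List.map_map, List.map_take, List.ofFn_eq_map]
  rfl

theorem ordProd_Ioi_succ {n : ℕ} (a : Fin (n + 1) → 𝓛) (u : Fin n) :
    ordProd (Finset.Ioi u.succ) a = ((List.ofFn fun k => a k.succ).drop (u + 1)).prod := by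
  rw [ordProd, Fin.sort_Ioi_succ, List.map_map, List.map_drop, List.ofFn_eq_map]
  rfl

def blockArgs (E : 𝓛 →ₗ[ℂ] 𝓛) {n : ℕ} (a : Fin n → 𝓛) (W : Finset (Fin n)) : Fin W.card → 𝓛 :=
  fun k => a (blockEnum W k) * E (ordProd (gapSet W (blockEnum W k)) a)

theorem apply_blockArgs_univ {β : Type*} (F : (n : ℕ) → (Fin n → 𝓛) → β) {E : 𝓛 →ₗ[ℂ] 𝓛}
    (hE : E 1 = 1) {n : ℕ} (a : Fin n → 𝓛) :
    F (Finset.univ : Finset (Fin n)).card (blockArgs E a Finset.univ) = F n a := by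
  refine apply_eq_apply_of_fin_cast F (by simp) fun j => ?_
  rw [blockArgs, blockEnum_univ (by simp), gapSet_univ, ordProd_empty, hE, mul_one]

theorem apply_blockArgs_pair {β : Type*} (F : (n : ℕ) → (Fin n → 𝓛) → β) (E : 𝓛 →ₗ[ℂ] 𝓛)
    {n : ℕ} (a : Fin (n + 1) → 𝓛) {v : Fin (n + 1)} (hv : v ≠ 0) :
    F ({0, v} : Finset (Fin (n + 1))).card (blockArgs E a {0, v}) =
      F 2 ![a 0 * E (ordProd (Finset.Ioo 0 v) a), a v * E (ordProd (Finset.Ioi v) a)] := by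
  have h : ({0, v} : Finset (Fin (n + 1))).card = 2 := Finset.card_pair hv.symm
  refine apply_eq_apply_of_fin_cast F h fun j => ?_
  fin_cases j
  · simp [blockArgs, blockEnum_pair_zero h, gapSet_pair_zero hv]
  · simp [blockArgs, blockEnum_pair_one h, gapSet_pair_right v]

section Cumulants

variable [CompleteSpace H] {V : TracialVN H} {B : VonNeumannAlgebra H}

namespace CondExpOn

variable (EB : CondExpOn V (B : Set (H →L[ℂ] H)))

theorem E_one : EB.E 1 = 1 :=
  EB.fix 1 (one_mem B)

theorem E_mul_left {b a : 𝓛} (hb : b ∈ B) (ha : a ∈ V.M) : EB.E (b * a) = b * EB.E a := by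
  simpa using EB.bimod b hb 1 (one_mem B) a ha

theorem E_mul_right {a b : 𝓛} (ha : a ∈ V.M) (hb : b ∈ B) : EB.E (a * b) = EB.E a * b := by
  simpa using EB.bimod 1 (one_mem B) b hb a ha

theorem τ_mul_E (hBM : (B : Set 𝓛) ⊆ V.M) {x a : 𝓛} (hx : x ∈ B) (ha : a ∈ V.M) :
    V.τ (x * EB.E a) = V.τ (x * a) := by
  rw [← EB.E_mul_left hx ha, EB.pres _ (mul_mem (hBM hx) ha)]

end CondExpOn

variable {EB : CondExpOn V (B : Set (H →L[ℂ] H))}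
  {κ : (n : ℕ) → (Fin n → (H →L[ℂ] H)) → (H →L[ℂ] H)}

namespace IsCumulantSeq

theorem condExp_ordProd_univ (hκ : IsCumulantSeq V EB.E κ) {n : ℕ} (a : Fin (n + 1) → 𝓛)
    (ha : ∀ m, a m ∈ V.M) :
    EB.E (ordProd Finset.univ a) =
      ∑ W ∈ Finset.univ.powerset.filter (fun W : Finset (Fin (n + 1)) => 0 ∈ W),
        κ W.card (blockArgs EB.E a W) :=
  hκ n a ha

theorem cumulant_one (hκ : IsCumulantSeq V EB.E κ) (a : Fin 1 → 𝓛) (ha : a 0 ∈ V.M) :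
    κ 1 a = EB.E (a 0) := by
  have h := hκ.condExp_ordProd_univ a fun m => (Fin.fin_one_eq_zero m).symm ▸ ha
  rw [show Finset.univ.powerset.filter (fun W : Finset (Fin 1) => 0 ∈ W) = {Finset.univ} by
    decide, Finset.sum_singleton, apply_blockArgs_univ κ EB.E_one] at h
  rw [← h, ordProd_univ, List.ofFn_succ, List.ofFn_zero, List.prod_singleton]

theorem condExp_mul (hκ : IsCumulantSeq V EB.E κ) (hBM : (B : Set 𝓛) ⊆ V.M) (a : Fin 2 → 𝓛)
    (ha : ∀ m, a m ∈ V.M) :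
    EB.E (a 0 * a 1) = EB.E (a 0 * EB.E (a 1)) + κ 2 a := by
  have h := hκ.condExp_ordProd_univ a ha
  rw [show Finset.univ.powerset.filter (fun W : Finset (Fin 2) => 0 ∈ W) = {{0}, Finset.univ} by
    decide, Finset.sum_pair (by decide), apply_blockArgs_univ κ EB.E_one] at h
  have hsingle : κ ({0} : Finset (Fin 2)).card (blockArgs EB.E a {0}) =
      κ 1 fun _ => a 0 * EB.E (a 1) := by
    refine apply_eq_apply_of_fin_cast κ rfl fun j => ?_
    have h0 : blockEnum {0} (Fin.cast rfl j) = 0 :=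
      Finset.mem_singleton.mp (Finset.orderIsoOfFin _ rfl _).2
    rw [blockArgs, h0, show gapSet ({0} : Finset (Fin 2)) 0 = {1} by decide]
    simp [ordProd]
  rw [hsingle, hκ.cumulant_one _ (mul_mem (ha 0) (hBM (EB.mem _ (ha 1))))] at h
  simpa [ordProd_univ] using h

theorem condExp_ordProd_eq_add_sum_pairs (hκ : IsCumulantSeq V EB.E κ) {n : ℕ} (hn : 2 ≤ n)
    (a : Fin (n + 1) → 𝓛) (ha : ∀ m, a m ∈ V.M)
    (hvan : ∀ W : Finset (Fin (n + 1)), 0 ∈ W → W ≠ Finset.univ → W.card ≠ 2 →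
      κ W.card (blockArgs EB.E a W) = 0) :
    EB.E (ordProd Finset.univ a) = κ (n + 1) a +
      ∑ u : Fin n, κ 2 ![a 0 * EB.E (ordProd (Finset.Ioo 0 u.succ) a),
        a u.succ * EB.E (ordProd (Finset.Ioi u.succ) a)] := by
  rw [hκ.condExp_ordProd_univ a ha,
    Finset.sum_filter_zero_mem_eq_add_sum_pairs hn (fun W => κ W.card (blockArgs EB.E a W)) hvan,
    apply_blockArgs_univ κ EB.E_one]
  exact congrArg _ (Finset.sum_congr rfl fun u _ =>
    apply_blockArgs_pair κ EB.E a (Fin.succ_ne_zero u))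

end IsCumulantSeq

end Cumulants

section Sandwich

def sandwich (s : I → 𝓛) {n : ℕ} (b c : Fin n → 𝓛) (j : Fin n → I) : Fin n → 𝓛 :=
  fun m => b m * s (j m) * c m

/-- The contribution of the blocks `{0, u + 1}` to the moment–cumulant expansion of
`E (∏ₘ bₘ s_{jₘ} cₘ)`. -/
def pairingSum (E : 𝓛 →ₗ[ℂ] 𝓛) (η : I → I → 𝓛 →ₗ[ℂ] 𝓛) (s : I → 𝓛) {n : ℕ}
    (b c : Fin (n + 1) → 𝓛) (j : Fin (n + 1) → I) : 𝓛 :=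
  ∑ u : Fin n, b 0 * η (j 0) (j u.succ)
      (c 0 * E (ordProd (Finset.Ioo 0 u.succ) (sandwich s b c j)) * b u.succ) *
    (c u.succ * E (ordProd (Finset.Ioi u.succ) (sandwich s b c j)))

def leftCoef {n : ℕ} (b c : Fin (n + 1) → 𝓛) : Fin (n + 1) → 𝓛 :=
  Fin.cons 1 fun k => c k.castSucc * b k.succ

variable (s : I → (H →L[ℂ] H)) {n : ℕ} (b c : Fin (n + 1) → (H →L[ℂ] H)) (j : Fin (n + 1) → I)

theorem mul_sandwich_succ (k : Fin n) :
    c k.castSucc * sandwich s b c j k.succ = sandwich s (leftCoef b c) 1 j k.succ * c k.succ := by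
  simp only [sandwich, leftCoef, Fin.cons_succ, Pi.one_apply, mul_one, mul_assoc]

theorem ordProd_univ_sandwich :
    ordProd Finset.univ (sandwich s b c j) =
      b 0 * ordProd Finset.univ (sandwich s (leftCoef b c) 1 j) * c (Fin.last n) := by
  have h := List.mul_prod_drop_ofFn (mul_sandwich_succ s b c j) 0
  simp only [Fin.val_zero, List.drop_zero] at h
  simp only [ordProd_univ, List.ofFn_succ, List.prod_cons, mul_assoc, ← h]
  simp [sandwich, leftCoef, mul_assoc]

theorem mul_ordProd_Ioo_sandwich (u : Fin n) :
    c 0 * ordProd (Finset.Ioo 0 u.succ) (sandwich s b c j) =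
      ordProd (Finset.Ioo 0 u.succ) (sandwich s (leftCoef b c) 1 j) * c u.castSucc := by
  rw [ordProd_Ioo_zero_succ, ordProd_Ioo_zero_succ]
  exact List.mul_prod_take_ofFn (mul_sandwich_succ s b c j) u.castSucc

theorem mul_ordProd_Ioi_sandwich (u : Fin n) :
    c u.succ * ordProd (Finset.Ioi u.succ) (sandwich s b c j) =
      ordProd (Finset.Ioi u.succ) (sandwich s (leftCoef b c) 1 j) * c (Fin.last n) := by
  rw [ordProd_Ioi_succ, ordProd_Ioi_succ]
  exact List.mul_prod_drop_ofFn (mul_sandwich_succ s b c j) u.succ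

end Sandwich

section Semicircular

variable [CompleteSpace H]

structure IsSemicircularFamily (V : TracialVN H) (B : VonNeumannAlgebra H)
    (EB : CondExpOn V (B : Set (H →L[ℂ] H)))
    (κ : (n : ℕ) → (Fin n → (H →L[ℂ] H)) → (H →L[ℂ] H))
    (η : I → I → (H →L[ℂ] H) →ₗ[ℂ] (H →L[ℂ] H)) (s : I → (H →L[ℂ] H)) : Prop where
  coef_subset : (B : Set 𝓛) ⊆ V.M
  mem : ∀ i, s i ∈ V.M
  isCumulantSeq : IsCumulantSeq V EB.E κ
  cumulant_two : ∀ i j, ∀ b ∈ B, κ 2 ![s i, b * s j] = η i j b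
  cumulant_eq_zero : ∀ d, d ≠ 1 → ∀ i (idx : Fin d → I) (bs : Fin d → 𝓛), (∀ k, bs k ∈ B) →
    κ (d + 1) (Fin.cons (s i) fun k => bs k * s (idx k)) = 0

namespace IsSemicircularFamily

variable {V : TracialVN H} {B : VonNeumannAlgebra H} {EB : CondExpOn V (B : Set (H →L[ℂ] H))}
  {κ : (n : ℕ) → (Fin n → (H →L[ℂ] H)) → (H →L[ℂ] H)}
  {η : I → I → (H →L[ℂ] H) →ₗ[ℂ] (H →L[ℂ] H)} {s : I → (H →L[ℂ] H)}

theorem condExp_eq_zero (hs : IsSemicircularFamily V B EB κ η s) (i : I) : EB.E (s i) = 0 := by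
  have h := hs.cumulant_eq_zero 0 zero_ne_one i Fin.elim0 Fin.elim0 fun k => k.elim0
  rwa [hs.isCumulantSeq.cumulant_one _ (hs.mem i), Fin.cons_zero] at h

theorem sandwich_mem (hs : IsSemicircularFamily V B EB κ η s) {n : ℕ} {b c : Fin n → 𝓛}
    (hb : ∀ m, b m ∈ B) (hc : ∀ m, c m ∈ B) (j : Fin n → I) (m : Fin n) :
    sandwich s b c j m ∈ V.M :=
  mul_mem (mul_mem (hs.coef_subset (hb m)) (hs.mem _)) (hs.coef_subset (hc m))

theorem condExp_sandwich (hs : IsSemicircularFamily V B EB κ η s) {n : ℕ} {b c : Fin n → 𝓛}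
    (hb : ∀ m, b m ∈ B) (hc : ∀ m, c m ∈ B) (j : Fin n → I) (m : Fin n) :
    EB.E (sandwich s b c j m) = 0 := by
  rw [sandwich, EB.bimod _ (hb m) _ (hc m) _ (hs.mem _), hs.condExp_eq_zero, mul_zero, zero_mul]

theorem cumulant_one_sandwich (hs : IsSemicircularFamily V B EB κ η s) {b c : Fin 1 → 𝓛}
    (hb : ∀ m, b m ∈ B) (hc : ∀ m, c m ∈ B) (j : Fin 1 → I) :
    κ 1 (sandwich s b c j) = 0 :=
  (hs.isCumulantSeq.cumulant_one _ (hs.sandwich_mem hb hc j 0)).trans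
    (hs.condExp_sandwich hb hc j 0)

theorem cumulant_two_sandwich (hs : IsSemicircularFamily V B EB κ η s) {b c : Fin 2 → 𝓛}
    (hb : ∀ m, b m ∈ B) (hc : ∀ m, c m ∈ B) (j : Fin 2 → I) :
    κ 2 (sandwich s b c j) = b 0 * η (j 0) (j 1) (c 0 * b 1) * c 1 := by
  have hcb : c 0 * b 1 ∈ B := mul_mem (hc 0) (hb 1)
  have hy := hs.isCumulantSeq.condExp_mul hs.coef_subset _ (hs.sandwich_mem hb hc j)
  rw [hs.condExp_sandwich hb hc j 1, mul_zero, map_zero, zero_add] at hy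
  have hpair := hs.isCumulantSeq.condExp_mul hs.coef_subset ![s (j 0), c 0 * b 1 * s (j 1)]
    (Fin.forall_fin_two.2 ⟨hs.mem _, mul_mem (hs.coef_subset hcb) (hs.mem _)⟩)
  simp only [Matrix.cons_val_zero, Matrix.cons_val_one, EB.E_mul_left hcb (hs.mem _),
    hs.condExp_eq_zero, mul_zero, map_zero, zero_add] at hpair
  rw [← hy, ← hs.cumulant_two _ _ _ hcb, ← hpair, ← EB.bimod _ (hb 0) _ (hc 1) _
    (mul_mem (hs.mem _) (mul_mem (hs.coef_subset hcb) (hs.mem _)))]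
  simp only [sandwich, mul_assoc]

theorem condExp_ordProd_sandwich_eq_add (hs : IsSemicircularFamily V B EB κ η s) {n : ℕ}
    (hn : 2 ≤ n) {b c : Fin (n + 1) → 𝓛} (hb : ∀ m, b m ∈ B) (hc : ∀ m, c m ∈ B)
    (j : Fin (n + 1) → I)
    (hsmall : ∀ N < n + 1, 0 < N → N ≠ 2 → ∀ {b c : Fin N → 𝓛}, (∀ m, b m ∈ B) →
      (∀ m, c m ∈ B) → ∀ j : Fin N → I, κ N (sandwich s b c j) = 0) :
    EB.E (ordProd Finset.univ (sandwich s b c j)) =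
      κ (n + 1) (sandwich s b c j) + pairingSum EB.E η s b c j := by
  have hyM := hs.sandwich_mem hb hc j
  have hEB : ∀ T, EB.E (ordProd T (sandwich s b c j)) ∈ B :=
    fun T => EB.mem _ (ordProd_mem V.M T hyM)
  rw [hs.isCumulantSeq.condExp_ordProd_eq_add_sum_pairs hn _ hyM ?_, pairingSum]
  · refine congrArg _ (Finset.sum_congr rfl fun u _ => ?_)
    set g₀ := EB.E (ordProd (Finset.Ioo 0 u.succ) (sandwich s b c j))
    set g₁ := EB.E (ordProd (Finset.Ioi u.succ) (sandwich s b c j))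
    have hpair : ![sandwich s b c j 0 * g₀, sandwich s b c j u.succ * g₁] =
        sandwich s ![b 0, b u.succ] ![c 0 * g₀, c u.succ * g₁] ![j 0, j u.succ] := by
      ext1 m; fin_cases m <;> simp [sandwich, mul_assoc]
    rw [hpair, hs.cumulant_two_sandwich (Fin.forall_fin_two.2 ⟨hb _, hb _⟩)
      (Fin.forall_fin_two.2 ⟨mul_mem (hc _) (hEB _), mul_mem (hc _) (hEB _)⟩)]
    simp [mul_assoc]
  · intro W h0 hW h2
    have hW' : W.card < n + 1 := by
      simpa using Finset.card_lt_card (Finset.ssubset_univ_iff.mpr hW)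
    have hargs : blockArgs EB.E (sandwich s b c j) W = sandwich s (fun k => b (blockEnum W k))
        (fun k => c (blockEnum W k) * EB.E (ordProd (gapSet W (blockEnum W k)) (sandwich s b c j)))
        (fun k => j (blockEnum W k)) := by
      funext k
      simp only [blockArgs, sandwich, mul_assoc]
    rw [hargs]
    exact hsmall _ hW' (Finset.card_pos.2 ⟨0, h0⟩) h2 (fun _ => hb _)
      (fun _ => mul_mem (hc _) (hEB _)) _

theorem pairingSum_eq_leftCoef (hs : IsSemicircularFamily V B EB κ η s) {n : ℕ}
    {b c : Fin (n + 1) → 𝓛} (hb : ∀ m, b m ∈ B) (hc : ∀ m, c m ∈ B) (j : Fin (n + 1) → I) :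
    pairingSum EB.E η s b c j = b 0 * pairingSum EB.E η s (leftCoef b c) 1 j * c (Fin.last n) := by
  have hlc : ∀ m, leftCoef b c m ∈ B := Fin.cases (one_mem B) fun k => mul_mem (hc _) (hb _)
  have hyM := hs.sandwich_mem hb hc j
  have hy'M := hs.sandwich_mem hlc (c := 1) (fun _ => one_mem B) j
  rw [pairingSum, pairingSum, Finset.mul_sum, Finset.sum_mul]
  refine Finset.sum_congr rfl fun u _ => ?_
  have hIoo : c 0 * EB.E (ordProd (Finset.Ioo 0 u.succ) (sandwich s b c j)) =
      EB.E (ordProd (Finset.Ioo 0 u.succ) (sandwich s (leftCoef b c) 1 j)) * c u.castSucc := by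
    rw [← EB.E_mul_left (hc 0) (ordProd_mem V.M _ hyM), mul_ordProd_Ioo_sandwich,
      EB.E_mul_right (ordProd_mem V.M _ hy'M) (hc _)]
  have hIoi : c u.succ * EB.E (ordProd (Finset.Ioi u.succ) (sandwich s b c j)) =
      EB.E (ordProd (Finset.Ioi u.succ) (sandwich s (leftCoef b c) 1 j)) * c (Fin.last n) := by
    rw [← EB.E_mul_left (hc _) (ordProd_mem V.M _ hyM), mul_ordProd_Ioi_sandwich,
      EB.E_mul_right (ordProd_mem V.M _ hy'M) (hc _)]
  rw [hIoo, hIoi]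
  simp [leftCoef, mul_assoc]

theorem cumulant_sandwich_eq_zero (hs : IsSemicircularFamily V B EB κ η s) (N : ℕ) (hN : 0 < N)
    (hN2 : N ≠ 2) {b c : Fin N → 𝓛} (hb : ∀ m, b m ∈ B) (hc : ∀ m, c m ∈ B) (j : Fin N → I) :
    κ N (sandwich s b c j) = 0 := by
  induction N using Nat.strong_induction_on with
  | _ N ih =>
  obtain ⟨n, rfl⟩ : ∃ n, N = n + 1 := ⟨N - 1, by omega⟩
  obtain rfl | hn : n = 0 ∨ 2 ≤ n := by omega
  · exact hs.cumulant_one_sandwich hb hc j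
  have hlc : ∀ m, leftCoef b c m ∈ B := Fin.cases (one_mem B) fun k => mul_mem (hc _) (hb _)
  have hnormal : κ (n + 1) (sandwich s (leftCoef b c) 1 j) = 0 := by
    convert hs.cumulant_eq_zero n (by omega) (j 0) (fun k => j k.succ)
      (fun k => c k.castSucc * b k.succ) (fun k => mul_mem (hc _) (hb _)) using 2
    funext m
    cases m using Fin.cases <;> simp [sandwich, leftCoef]
  have hone : ∀ m, (1 : Fin (n + 1) → 𝓛) m ∈ B := fun _ => one_mem B
  have hy := hs.condExp_ordProd_sandwich_eq_add hn hb hc j ih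
  rw [ordProd_univ_sandwich, EB.bimod _ (hb 0) _ (hc _) _
      (ordProd_mem V.M _ (hs.sandwich_mem hlc hone j)),
    hs.condExp_ordProd_sandwich_eq_add hn hlc hone j ih, hnormal, zero_add,
    ← hs.pairingSum_eq_leftCoef hb hc j] at hy
  exact add_eq_right.mp hy.symm

theorem condExp_ordProd_sandwich (hs : IsSemicircularFamily V B EB κ η s) {n : ℕ}
    {b c : Fin (n + 1) → 𝓛} (hb : ∀ m, b m ∈ B) (hc : ∀ m, c m ∈ B) (j : Fin (n + 1) → I) :
    EB.E (ordProd Finset.univ (sandwich s b c j)) = pairingSum EB.E η s b c j := by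
  match n, b, c, j, hb, hc with
  | 0, b, c, j, hb, hc =>
    rw [ordProd_univ, List.ofFn_succ, List.ofFn_zero, List.prod_singleton,
      hs.condExp_sandwich hb hc j 0, pairingSum, Finset.univ_eq_empty, Finset.sum_empty]
  | 1, b, c, j, hb, hc =>
    have h := hs.isCumulantSeq.condExp_mul hs.coef_subset _ (hs.sandwich_mem hb hc j)
    rw [hs.condExp_sandwich hb hc j 1, mul_zero, map_zero, zero_add,
      hs.cumulant_two_sandwich hb hc j] at h
    rw [ordProd_univ, pairingSum, Fin.sum_univ_one]
    simp only [Fin.succ_zero_eq_one, show Finset.Ioo (0 : Fin 2) 1 = ∅ by decide,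
      show Finset.Ioi (1 : Fin 2) = ∅ by decide, ordProd_empty, EB.E_one, mul_one]
    simpa [List.ofFn_succ] using h
  | n + 2, b, c, j, hb, hc =>
    rw [hs.condExp_ordProd_sandwich_eq_add (by omega) hb hc j
      fun N _ hN hN2 => hs.cumulant_sandwich_eq_zero N hN hN2,
      hs.cumulant_sandwich_eq_zero _ (by omega) (by omega) hb hc j, zero_add]

end IsSemicircularFamily

end Semicircular

def letters (s : I → 𝓛) {n : ℕ} (j : Fin n → I) (c : Fin n → 𝓛) : List 𝓛 :=
  List.ofFn fun k => s (j k) * c k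

def word (s : I → 𝓛) {n : ℕ} (j : Fin n → I) (c : Fin n → 𝓛) : 𝓛 :=
  (letters s j c).prod

theorem forall_mem_letters {S : Type*} [SetLike S 𝓛] [MulMemClass S 𝓛] {W : S} {s : I → 𝓛}
    {n : ℕ} {j : Fin n → I} {c : Fin n → 𝓛} (hs : ∀ i, s i ∈ W) (hc : ∀ k, c k ∈ W) :
    ∀ y ∈ letters s j c, y ∈ W := fun _ hy => by
  obtain ⟨k, rfl⟩ := List.mem_ofFn.mp hy
  exact mul_mem (hs _) (hc k)

theorem mem_polyAlg_of_mem_coef {coef : Set 𝓛} (x : I → 𝓛) {b : 𝓛} (hb : b ∈ coef) :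
    b ∈ polyAlg coef x :=
  Algebra.subset_adjoin (Or.inl hb)

theorem mem_polyAlg_self (coef : Set 𝓛) (x : I → 𝓛) (i : I) : x i ∈ polyAlg coef x :=
  Algebra.subset_adjoin (Or.inr ⟨i, rfl⟩)

theorem mem_span_words {S : Type*} [SetLike S 𝓛] [SubmonoidClass S 𝓛] (B : S) (s : I → 𝓛)
    {p : 𝓛} (hp : p ∈ polyAlg (B : Set 𝓛) s) :
    p ∈ Submodule.span ℂ {x | ∃ (n : ℕ) (bb : 𝓛) (j : Fin n → I) (c : Fin n → 𝓛),
      bb ∈ B ∧ (∀ k, c k ∈ B) ∧ x = bb * word s j c} := by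
  have hp' : p ∈ Subalgebra.toSubmodule (polyAlg (B : Set 𝓛) s) := hp
  rw [polyAlg, Algebra.adjoin_eq_span] at hp'
  refine Submodule.span_mono (fun x hx => ?_) hp'
  induction hx using Submonoid.closure_induction_left with
  | one => exact ⟨0, 1, Fin.elim0, Fin.elim0, one_mem B, (·.elim0), by simp [word, letters]⟩
  | mul_left x hx y _ ih =>
    obtain ⟨n, bb, j, c, hbb, hc, rfl⟩ := ih
    rcases hx with hx | ⟨i, rfl⟩
    · exact ⟨n, x * bb, j, c, mul_mem hx hbb, hc, (mul_assoc _ _ _).symm⟩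
    · exact ⟨n + 1, 1, Fin.cons i j, Fin.cons bb c, one_mem B, Fin.cases hbb hc,
        by simp [word, letters, List.ofFn_succ, mul_assoc]⟩

section Derivative

variable [CompleteSpace H] {V : TracialVN H} {E : (H →L[ℂ] H) →ₗ[ℂ] (H →L[ℂ] H)}
  {η : I → I → (H →L[ℂ] H) →ₗ[ℂ] (H →L[ℂ] H)} {K : Type} [NormedAddCommGroup K]
  [InnerProductSpace ℂ K] [CompleteSpace K]

theorem EtaCorr.inner_e_kl_kr (C : EtaCorr V I E η K) (i j : I) {a b : 𝓛} (ha : a ∈ V.M)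
    (hb : b ∈ V.M) : ⟪C.e i, C.kl a (C.kr b (C.e j))⟫_ℂ = V.τ (η i j (E a) * b) := by
  have h := C.inner_gen i j 1 (one_mem _) 1 (one_mem _) a ha b hb
  rwa [C.kl_one, C.kr_one, LinearMap.id_apply, LinearMap.id_apply, star_one, one_mul, one_mul] at h

namespace EtaDer

variable {C : EtaCorr V I E η K} {coef : Set (H →L[ℂ] H)} {x : I → (H →L[ℂ] H)}

theorem D_one (Der : EtaDer C coef x) : Der.D 1 = 0 := by
  have h := Der.D_leibniz 1 (one_mem _) 1 (one_mem _)
  rw [mul_one, C.kr_one, C.kl_one, LinearMap.id_apply] at h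
  exact left_eq_add.mp h

theorem D_prod_ofFn (Der : EtaDer C coef x) {n : ℕ} (a : Fin n → 𝓛)
    (ha : ∀ k, a k ∈ polyAlg coef x) :
    Der.D (List.ofFn a).prod = ∑ k : Fin n,
      C.kl ((List.ofFn a).take k).prod (C.kr ((List.ofFn a).drop (k + 1)).prod (Der.D (a k))) := by
  induction n with
  | zero => simp [Der.D_one]
  | succ n ih =>
    rw [List.ofFn_succ, List.prod_cons, Der.D_leibniz _ (ha 0) _
      (list_prod_mem fun y hy => by obtain ⟨k, rfl⟩ := List.mem_ofFn.mp hy; exact ha _),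
      ih _ fun k => ha _, Fin.sum_univ_succ, map_sum]
    simp [C.kl_mul, C.kl_one]

theorem inner_e_D_mul_word (Der : EtaDer C coef x) (hcoef : coef ⊆ V.M) (hxM : ∀ i, x i ∈ V.M)
    (i : I) {n : ℕ} {bb : 𝓛} {j : Fin n → I} {c : Fin n → 𝓛} (hbb : bb ∈ coef)
    (hc : ∀ k, c k ∈ coef) :
    ⟪C.e i, Der.D (bb * word x j c)⟫_ℂ = ∑ k : Fin n,
      V.τ (η i (j k) (E (bb * ((letters x j c).take k).prod)) *
        (c k * ((letters x j c).drop (k + 1)).prod)) := by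
  have hcP : ∀ k, c k ∈ polyAlg coef x := fun k => mem_polyAlg_of_mem_coef x (hc k)
  have hletterM := forall_mem_letters (j := j) hxM fun k => hcoef (hc k)
  rw [word, Der.D_leibniz bb (mem_polyAlg_of_mem_coef x hbb) _
      (list_prod_mem (forall_mem_letters (mem_polyAlg_self coef x) hcP)),
    Der.D_coef bb hbb, map_zero, zero_add, letters,
    Der.D_prod_ofFn _ fun k => mul_mem (mem_polyAlg_self coef x _) (hcP k), map_sum, inner_sum]
  refine Finset.sum_congr rfl fun k _ => ?_
  have hpre : ((letters x j c).take k).prod ∈ V.M :=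
    list_prod_mem fun y hy => hletterM y (List.mem_of_mem_take hy)
  have hsuf : ((letters x j c).drop (k + 1)).prod ∈ V.M :=
    list_prod_mem fun y hy => hletterM y (List.mem_of_mem_drop hy)
  rw [Der.D_leibniz _ (mem_polyAlg_self coef x _) _ (hcP k), Der.D_x, Der.D_coef _ (hc k),
    map_zero, add_zero, ← LinearMap.comp_apply (C.kr _) (C.kr _), ← C.kr_mul,
    ← LinearMap.comp_apply (C.kl _) (C.kl _), ← C.kl_mul]
  exact C.inner_e_kl_kr i (j k) (mul_mem (hcoef hbb) hpre) (mul_mem (hcoef (hc k)) hsuf)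

end EtaDer

end Derivative

section ConjugateSystem

variable [CompleteSpace H] {V : TracialVN H} {B : VonNeumannAlgebra H}
  {EB : CondExpOn V (B : Set (H →L[ℂ] H))} {κ : (n : ℕ) → (Fin n → (H →L[ℂ] H)) → (H →L[ℂ] H)}
  {η : I → I → (H →L[ℂ] H) →ₗ[ℂ] (H →L[ℂ] H)} {s : I → (H →L[ℂ] H)}
  {L : Type} [NormedAddCommGroup L] [InnerProductSpace ℂ L] [CompleteSpace L]

theorem IsSemicircularFamily.inner_ι_mul_word (hs : IsSemicircularFamily V B EB κ η s)
    (hη : ∀ i j, ∀ b ∈ (B : Set 𝓛), η i j b ∈ (B : Set 𝓛)) (L2 : L2Rep V L) {i : I}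
    (hsa : IsSelfAdjoint (s i)) {n : ℕ} {bb : 𝓛} {j : Fin n → I} {c : Fin n → 𝓛} (hbb : bb ∈ B)
    (hc : ∀ k, c k ∈ B) :
    ⟪L2.ι (s i), L2.ι (bb * word s j c)⟫_ℂ = ∑ k : Fin n,
      V.τ (η i (j k) (EB.E (bb * ((letters s j c).take k).prod)) *
        (c k * ((letters s j c).drop (k + 1)).prod)) := by
  have hletterM := forall_mem_letters (j := j) hs.mem fun k => hs.coef_subset (hc k)
  have hw : word s j c ∈ V.M := list_prod_mem hletterM
  have hone : ∀ m, (1 : Fin (n + 1) → 𝓛) m ∈ B := fun _ => one_mem B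
  have hc' : ∀ m, (Fin.cons bb c : Fin (n + 1) → 𝓛) m ∈ B := Fin.cases hbb hc
  have htail : (List.ofFn fun m => sandwich s 1 (Fin.cons bb c) (Fin.cons i j) m.succ) =
      letters s j c := by
    simp [sandwich, letters]
  have hprod : s i * (bb * word s j c) =
      ordProd Finset.univ (sandwich s 1 (Fin.cons bb c) (Fin.cons i j)) := by
    rw [ordProd_univ, List.ofFn_succ, List.prod_cons, htail]
    simp [sandwich, word, mul_assoc]
  rw [L2.inner_eq _ (hs.mem i) _ (mul_mem (hs.coef_subset hbb) hw),
    hsa.star_eq, hprod, ← EB.pres _ (ordProd_mem V.M _ (hs.sandwich_mem hone hc' _)),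
    hs.condExp_ordProd_sandwich hone hc', pairingSum, map_sum]
  refine Finset.sum_congr rfl fun k _ => ?_
  rw [ordProd_Ioo_zero_succ, ordProd_Ioi_succ, htail]
  simp only [Pi.one_apply, one_mul, mul_one, Fin.cons_zero, Fin.cons_succ]
  have hpre : ((letters s j c).take k).prod ∈ V.M :=
    list_prod_mem fun y hy => hletterM y (List.mem_of_mem_take hy)
  have hsuf : ((letters s j c).drop (k + 1)).prod ∈ V.M :=
    list_prod_mem fun y hy => hletterM y (List.mem_of_mem_drop hy)
  rw [← EB.E_mul_left hbb hpre, ← mul_assoc, ← mul_assoc, EB.τ_mul_E hs.coef_subset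
    (mul_mem (hη _ _ _ (EB.mem _ (mul_mem (hs.coef_subset hbb) hpre))) (hc k)) hsuf]

end ConjugateSystem

end

theorem statement9_general
    {H : Type} [NormedAddCommGroup H] [InnerProductSpace ℂ H] [CompleteSpace H]
    {I : Type}
    -- `(Φ(B,η), τ∘E_B)`, the von Neumann algebra generated by `B` and the family `s` :
    (V : TracialVN H) (B : VonNeumannAlgebra H)
    (hBM : (B : Set (H →L[ℂ] H)) ⊆ (V.M : Set (H →L[ℂ] H)))
    (s : I → (H →L[ℂ] H)) (hsM : ∀ i, s i ∈ V.M) (hssa : ∀ i, IsSelfAdjoint (s i))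
    (EB : CondExpOn V (B : Set (H →L[ℂ] H)))
    (η : I → I → (H →L[ℂ] H) →ₗ[ℂ] (H →L[ℂ] H))
    (hcov : IsCovariance V (B : Set (H →L[ℂ] H)) EB η)
    -- the `B`-valued cumulants with respect to `E_B` :
    (κ : (n : ℕ) → (Fin n → (H →L[ℂ] H)) → (H →L[ℂ] H))
    (hκ : IsCumulantSeq V EB.E κ)
    -- `s` is a `B`-valued semicircular family with covariance `η` :
    (hsem2 : ∀ (i j : I), ∀ b ∈ B, κ 2 ![s i, b * s j] = η i j b)
    (hsemd : ∀ (d : ℕ), d ≠ 1 → ∀ (i : I) (idx : Fin d → I) (bs : Fin d → (H →L[ℂ] H)),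
      (∀ k, bs k ∈ B) →
      κ (d + 1) (Fin.cons (s i) (fun k => bs k * s (idx k))) = 0)
    {L K : Type} [NormedAddCommGroup L] [InnerProductSpace ℂ L] [CompleteSpace L]
    [NormedAddCommGroup K] [InnerProductSpace ℂ K] [CompleteSpace K]
    (L2 : L2Rep V L) (C : EtaCorr V I EB.E η K)
    (Der : EtaDer C (B : Set (H →L[ℂ] H)) s) :
    IsConjugateSystem L2 C Der (fun i => L2.ι (s i)) := by
  have hs : IsSemicircularFamily V B EB κ η s := ⟨hBM, hsM, hκ, hsem2, hsemd⟩
  intro i p hp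
  have hwords : Submodule.span ℂ {x | ∃ (n : ℕ) (bb : H →L[ℂ] H) (j : Fin n → I)
      (c : Fin n → (H →L[ℂ] H)), bb ∈ B ∧ (∀ k, c k ∈ B) ∧ x = bb * word s j c} ≤
      LinearMap.eqLocus ((innerₛₗ ℂ (L2.ι (s i))).comp L2.ι) ((innerₛₗ ℂ (C.e i)).comp Der.D) := by
    refine Submodule.span_le.mpr ?_
    rintro _ ⟨n, bb, j, c, hbb, hc, rfl⟩
    simp only [SetLike.mem_coe, LinearMap.mem_eqLocus, LinearMap.comp_apply, innerₛₗ_apply_apply]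
    rw [hs.inner_ι_mul_word hcov.1 L2 (hssa i) hbb hc,
      Der.inner_e_D_mul_word hBM hsM i hbb hc]
  simpa using hwords (mem_span_words B s hp)

theorem statement9
    {H : Type} [NormedAddCommGroup H] [InnerProductSpace ℂ H] [CompleteSpace H]
    {I : Type} [Countable I]
    -- `(Φ(B,η), τ∘E_B)`, the von Neumann algebra generated by `B` and the family `s` :
    (V : TracialVN H) (B : VonNeumannAlgebra H)
    (hBM : (B : Set (H →L[ℂ] H)) ⊆ (V.M : Set (H →L[ℂ] H)))
    (s : I → (H →L[ℂ] H)) (hsM : ∀ i, s i ∈ V.M) (hssa : ∀ i, IsSelfAdjoint (s i))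
    (hgen : (V.M : Set (H →L[ℂ] H)) = vnGen ((B : Set (H →L[ℂ] H)) ∪ Set.range s))
    (EB : CondExpOn V (B : Set (H →L[ℂ] H)))
    (η : I → I → (H →L[ℂ] H) →ₗ[ℂ] (H →L[ℂ] H))
    (hcov : IsCovariance V (B : Set (H →L[ℂ] H)) EB η)
    -- the `B`-valued cumulants with respect to `E_B` :
    (κ : (n : ℕ) → (Fin n → (H →L[ℂ] H)) → (H →L[ℂ] H))
    (hκ : IsCumulantSeq V EB.E κ)
    -- `s` is a `B`-valued semicircular family with covariance `η` :
    (hsem2 : ∀ (i j : I), ∀ b ∈ B, κ 2 ![s i, b * s j] = η i j b)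
    (hsemd : ∀ (d : ℕ), d ≠ 1 → ∀ (i : I) (idx : Fin d → I) (bs : Fin d → (H →L[ℂ] H)),
      (∀ k, bs k ∈ B) →
      κ (d + 1) (Fin.cons (s i) (fun k => bs k * s (idx k))) = 0)
    {L K : Type} [NormedAddCommGroup L] [InnerProductSpace ℂ L] [CompleteSpace L]
    [NormedAddCommGroup K] [InnerProductSpace ℂ K] [CompleteSpace K]
    (L2 : L2Rep V L) (C : EtaCorr V I EB.E η K)
    (Der : EtaDer C (B : Set (H →L[ℂ] H)) s) :
    IsConjugateSystem L2 C Der (fun i => L2.ι (s i)) :=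
  statement9_general V B hBM s hsM hssa EB η hcov κ hκ hsem2 hsemd L2 C Der

end
end

section
/- Let (M,τ) be a tracial von Neumann algebra, let B ≤ N ≤ M be von Neumann subalgebras with N ⊀_M B (no corner of N embeds into B inside M in the sense of Popa), and let η be a covariance matrix on B extended as η∘E_B. Then L²(M⊠_η M,τ) has no nonzero N-central vectors, i.e., if ζ ∈ L²(M⊠_η M,τ) satisfies yζ = ζy for all y∈N, then ζ = 0. -/
/- Common framework: tracial von Neumann algebras, conditional expectations,
covariance matrices, the correspondence `L²(M ⊠_η M, τ)`, the η-partial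
derivative, (B,η)-conjugate systems, Popa intertwining and operator-valued
cumulants, following the paper
"Conjugate systems relative to covariance matrices". -/

open scoped InnerProductSpace ComplexOrder

/-! The pairing of an `N`-central vector `ζ` with a generator `a e_i b` is unchanged by
conjugating the generator with a unitary `u ∈ N`: `⟪a e_i b, ζ⟫ = ⟪u^* a e_i b u, ζ⟫`.
Against another generator `c e_j d`, the conjugated vector pairs to
`τ(u^* b^* η_{ij}(E_B(a^* u c)) d)`; moving `η` across `τ` by its symmetry turns this into
an inner product `⟪(b u d^*) e_j, e_i E_B(a^* u c)⟫`, which Cauchy–Schwarz bounds by a multiple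
of `‖E_B(a^* u c)‖_τ`. Along a net of unitaries witnessing `N ⊀_M B` these pairings tend to `0`,
hence, by density and uniform boundedness, so does `⟪u_k^* a e_i b u_k, ζ⟫`. So `ζ` is orthogonal
to every `a e_i b`, and `ζ = 0`. -/

open Filter Topology

theorem tendsto_inner_of_dense_span {𝕜 E ι : Type*} [RCLike 𝕜] [NormedAddCommGroup E]
    [InnerProductSpace 𝕜 E] {l : Filter ι} {s : Set E} (hs : Dense (Submodule.span 𝕜 s : Set E))
    {v : ι → E} {R : ℝ} (hv : ∀ k, ‖v k‖ ≤ R)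
    (h : ∀ w ∈ s, Tendsto (fun k => ⟪v k, w⟫_𝕜) l (𝓝 0)) (w : E) :
    Tendsto (fun k => ⟪v k, w⟫_𝕜) l (𝓝 0) := by
  let S : Submodule 𝕜 E :=
    { carrier := {w | Tendsto (fun k => ⟪v k, w⟫_𝕜) l (𝓝 0)}
      add_mem' := fun hw hw' => by simpa [inner_add_right] using hw.add hw'
      zero_mem' := by simpa using tendsto_const_nhds
      smul_mem' := fun c w hw => by simpa [inner_smul_right] using hw.const_mul c }
  have hequi : Equicontinuous fun k => innerSL 𝕜 (v k) :=
    ((NormedSpace.equicontinuous_TFAE fun k => innerSL 𝕜 (v k)).out 5 1).mp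
      (⟨R, fun k => (innerSL_apply_norm 𝕜 (v k)).le.trans (hv k)⟩ : ∃ C, ∀ k, _ ≤ C)
  have hS : IsClosed (S : Set E) :=
    hequi.isClosed_setOfPred_tendsto (f := fun _ => (0 : 𝕜)) continuous_const
  exact closure_minimal (Submodule.span_le (p := S).mpr h) hS (hs w)

theorem ContinuousLinearMap.norm_le_one_of_star_mul_self_eq_one {H : Type*}
    [NormedAddCommGroup H] [InnerProductSpace ℂ H] [CompleteSpace H] {u : H →L[ℂ] H}
    (hu : star u * u = 1) : ‖u‖ ≤ 1 := by
  have : ‖u‖ * ‖u‖ ≤ 1 := by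
    rw [← CStarRing.norm_star_mul_self, hu]; exact ContinuousLinearMap.norm_id_le
  nlinarith [norm_nonneg u]

instance VonNeumannAlgebra.isClosed {H : Type*} [NormedAddCommGroup H] [InnerProductSpace ℂ H]
    [CompleteSpace H] (M : VonNeumannAlgebra H) :
    IsClosed (M.toStarSubalgebra : Set (H →L[ℂ] H)) := by
  change IsClosed (M : Set (H →L[ℂ] H))
  rw [← M.centralizer_centralizer]
  exact Set.isClosed_centralizer _

namespace TracialVN

variable {H : Type} [NormedAddCommGroup H] [InnerProductSpace ℂ H] [CompleteSpace H]
  (V : TracialVN H)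

theorem real_smul_mem (r : ℝ) {a : H →L[ℂ] H} (ha : a ∈ V.M) : r • a ∈ V.M := by
  rw [← Complex.coe_smul]
  exact V.M.toStarSubalgebra.smul_mem ha _

theorem algebraMap_mem (r : ℝ) : algebraMap ℝ (H →L[ℂ] H) r ∈ V.M := by
  rw [Algebra.algebraMap_eq_smul_one]
  exact V.real_smul_mem r (one_mem _)

theorem τ_star_mul_mul_nonneg {P y : H →L[ℂ] H} (hP : P ∈ V.M) (hP₀ : 0 ≤ P) (hy : y ∈ V.M) :
    0 ≤ V.τ (star y * P * y) := by
  have hs : CFC.sqrt P ∈ V.M := by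
    rw [CFC.sqrt_eq_real_sqrt P, cfcₙ_eq_cfc]
    exact cfc_mem (s := V.M.toStarSubalgebra) (𝕜 := ℝ) (𝕜' := ℂ) _ hP
  have hPs : star y * P * y = star (CFC.sqrt P * y) * (CFC.sqrt P * y) := by
    rw [star_mul, (CFC.sqrt_nonneg P).isSelfAdjoint.star_eq]
    nth_rw 1 [← CFC.sqrt_mul_sqrt_self P]
    noncomm_ring
  rw [hPs]
  exact V.τ_pos _ (mul_mem hs hy)

theorem re_τ_star_mul_realPart_mul {X y : H →L[ℂ] H} (hX : X ∈ V.M) (hy : y ∈ V.M) :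
    (V.τ (star y * realPart X * y)).re = (V.τ (star y * X * y)).re := by
  have hconj : V.τ (star y * star X * y) = starRingEnd ℂ (V.τ (star y * X * y)) := by
    rw [← V.τ_star _ (mul_mem (mul_mem (star_mem hy) hX) hy)]
    simp only [star_mul, star_star, mul_assoc]
  rw [realPart_apply_coe, mul_smul_comm, smul_mul_assoc, LinearMap.map_smul_of_tower, mul_add,
    add_mul, map_add, hconj, Complex.smul_re, Complex.add_re, Complex.conj_re, smul_eq_mul]
  ring

theorem re_τ_star_mul_mul_le {X y : H →L[ℂ] H} (hX : X ∈ V.M) (hy : y ∈ V.M) :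
    (V.τ (star y * X * y)).re ≤ ‖X‖ * (V.τ (star y * y)).re := by
  have hRM : (realPart X : H →L[ℂ] H) ∈ V.M := by
    rw [realPart_apply_coe]
    exact V.real_smul_mem _ (add_mem hX (star_mem hX))
  have hR : realPart X ≤ algebraMap ℝ (H →L[ℂ] H) ‖X‖ :=
    (realPart X).2.le_algebraMap_norm_self.trans (algebraMap_mono _ (realPart.norm_le X))
  have hpos := V.τ_star_mul_mul_nonneg (sub_mem (V.algebraMap_mem ‖X‖) hRM)
    (sub_nonneg.mpr hR) hy
  rw [Algebra.algebraMap_eq_smul_one, mul_sub, sub_mul, mul_smul_comm, mul_one, smul_mul_assoc,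
    map_sub, LinearMap.map_smul_of_tower, sub_nonneg, Complex.le_def] at hpos
  rw [← V.re_τ_star_mul_realPart_mul hX hy]
  simpa using hpos.1

end TracialVN

namespace EtaCorr

variable {H : Type} [NormedAddCommGroup H] [InnerProductSpace ℂ H] [CompleteSpace H]
  {V : TracialVN H} {I : Type} {E : (H →L[ℂ] H) →ₗ[ℂ] (H →L[ℂ] H)}
  {η : I → I → (H →L[ℂ] H) →ₗ[ℂ] (H →L[ℂ] H)} {K : Type} [NormedAddCommGroup K]
  [InnerProductSpace ℂ K] [CompleteSpace K] (C : EtaCorr V I E η K)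

theorem continuousLinearMap_ext {F : Type} [TopologicalSpace F] [T2Space F] [AddCommMonoid F] [Module ℂ F]
    {f g : K →L[ℂ] F}
    (h : ∀ i, ∀ a ∈ V.M, ∀ b ∈ V.M, f (C.gen a i b) = g (C.gen a i b)) : f = g :=
  ContinuousLinearMap.ext_on C.dense_span (by rintro _ ⟨i, a, b, ha, hb, rfl⟩; exact h i a ha b hb)

theorem eq_zero_of_inner_gen {ζ : K} (h : ∀ i, ∀ a ∈ V.M, ∀ b ∈ V.M, ⟪C.gen a i b, ζ⟫_ℂ = 0) :
    ζ = 0 := by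
  have : innerSL ℂ ζ = 0 := C.continuousLinearMap_ext fun i a ha b hb => by
    rw [innerSL_apply_apply, ← inner_conj_symm, h i a ha b hb, map_zero]
    rfl
  simpa using congr($this ζ)

theorem inner_gen_gen {a b c d : H →L[ℂ] H} (ha : a ∈ V.M) (hb : b ∈ V.M) (hc : c ∈ V.M)
    (hd : d ∈ V.M) (i j : I) :
    ⟪C.gen a i b, C.gen c j d⟫_ℂ = V.τ (star b * η i j (E (star a * c)) * d) :=
  C.inner_gen i j a ha b hb c hc d hd

theorem kl_gen (u a b : H →L[ℂ] H) (i : I) : C.kl u (C.gen a i b) = C.gen (u * a) i b := by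
  simp only [gen, kl_mul, LinearMap.comp_apply]

theorem kr_gen (u a b : H →L[ℂ] H) (i : I) : C.kr u (C.gen a i b) = C.gen a i (b * u) := by
  simp only [gen, kr_mul, LinearMap.comp_apply, kl_kr]

theorem inner_gen_kl {u x y : H →L[ℂ] H} (hu : u ∈ V.M) (hx : x ∈ V.M) (hy : y ∈ V.M) (i : I)
    (ζ : K) : ⟪C.gen x i y, C.kl u ζ⟫_ℂ = ⟪C.gen (star u * x) i y, ζ⟫_ℂ := by
  have := C.continuousLinearMap_ext (f := innerSL ℂ (C.gen x i y) ∘L (C.kl u).mkContinuous ‖u‖ (C.kl_bound u hu))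
    (g := innerSL ℂ (C.gen (star u * x) i y)) fun j c hc d hd => by
      simp only [ContinuousLinearMap.comp_apply, LinearMap.mkContinuous_apply, innerSL_apply_apply,
        kl_gen]
      rw [C.inner_gen_gen hx hy (mul_mem hu hc) hd,
        C.inner_gen_gen (mul_mem (star_mem hu) hx) hy hc hd, star_mul, star_star]
      simp only [mul_assoc]
  simpa using congr($this ζ)

theorem inner_gen_kr (hηM : ∀ i j, ∀ a ∈ V.M, η i j (E a) ∈ V.M) {u x y : H →L[ℂ] H}
    (hu : u ∈ V.M) (hx : x ∈ V.M) (hy : y ∈ V.M) (i : I) (ζ : K) :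
    ⟪C.gen x i y, C.kr u ζ⟫_ℂ = ⟪C.gen x i (y * star u), ζ⟫_ℂ := by
  have := C.continuousLinearMap_ext (f := innerSL ℂ (C.gen x i y) ∘L (C.kr u).mkContinuous ‖u‖ (C.kr_bound u hu))
    (g := innerSL ℂ (C.gen x i (y * star u))) fun j c hc d hd => by
      simp only [ContinuousLinearMap.comp_apply, LinearMap.mkContinuous_apply, innerSL_apply_apply,
        kr_gen]
      have hW := hηM i j _ (mul_mem (star_mem hx) hc)
      rw [C.inner_gen_gen hx hy hc (mul_mem hd hu),
        C.inner_gen_gen hx (mul_mem hy (star_mem hu)) hc hd, star_mul, star_star, ← mul_assoc,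
        V.τ_trace _ (mul_mem (mul_mem (star_mem hy) hW) hd) u hu]
      simp only [mul_assoc]
  simpa using congr($this ζ)

theorem norm_gen_le {a b : H →L[ℂ] H} (ha : a ∈ V.M) (hb : b ∈ V.M) (i : I) :
    ‖C.gen a i b‖ ≤ ‖a‖ * (‖b‖ * ‖C.e i‖) :=
  (C.kl_bound a ha _).trans (by gcongr; exact C.kr_bound b hb _)

theorem norm_kr_e_le {z : H →L[ℂ] H} (hz : z ∈ V.M) (i : I) (hX : η i i (E 1) ∈ V.M) :
    ‖C.kr z (C.e i)‖ ≤ √‖η i i (E 1)‖ * V.τNorm z := by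
  have hsq : ‖C.kr z (C.e i)‖ ^ 2 ≤ ‖η i i (E 1)‖ * (V.τ (star z * z)).re := by
    have := C.inner_gen i i 1 (one_mem _) z hz 1 (one_mem _) z hz
    rw [C.kl_one, LinearMap.id_apply, star_one, one_mul] at this
    rw [← inner_self_eq_norm_sq (𝕜 := ℂ), this]
    exact V.re_τ_star_mul_mul_le hX hz
  rw [TracialVN.τNorm, ← Real.sqrt_mul (norm_nonneg _)]
  exact Real.le_sqrt_of_sq_le hsq

end EtaCorr

section Covariance

variable {H : Type} [NormedAddCommGroup H] [InnerProductSpace ℂ H] [CompleteSpace H]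
  {V : TracialVN H} {I : Type} {B : VonNeumannAlgebra H} {EB : CondExpOn V (B : Set (H →L[ℂ] H))}
  {η : I → I → (H →L[ℂ] H) →ₗ[ℂ] (H →L[ℂ] H)}

theorem IsCovariance.apply_condExp_mem (hcov : IsCovariance V (B : Set (H →L[ℂ] H)) EB η)
    (hBM : (B : Set (H →L[ℂ] H)) ⊆ V.M) (i j : I) {a : H →L[ℂ] H} (ha : a ∈ V.M) :
    η i j (EB.E a) ∈ V.M :=
  hBM (hcov.1 i j _ (EB.mem a ha))

variable {K : Type} [NormedAddCommGroup K] [InnerProductSpace ℂ K] [CompleteSpace K]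
  (C : EtaCorr V I EB.E η K)

theorem EtaCorr.inner_gen_gen_eq_inner_kl_kr (hcov : IsCovariance V (B : Set (H →L[ℂ] H)) EB η)
    (hBM : (B : Set (H →L[ℂ] H)) ⊆ V.M) {x y c d : H →L[ℂ] H} (hx : x ∈ V.M) (hy : y ∈ V.M)
    (hc : c ∈ V.M) (hd : d ∈ V.M) (i j : I) :
    ⟪C.gen x i y, C.gen c j d⟫_ℂ =
      ⟪C.kl (y * star d) (C.e j), C.kr (EB.E (star x * c)) (C.e i)⟫_ℂ := by
  set z := EB.E (star x * c)
  have hzB : z ∈ (B : Set (H →L[ℂ] H)) := EB.mem _ (mul_mem (star_mem hx) hc)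
  have hm : d * star y ∈ V.M := mul_mem hd (star_mem hy)
  have hW : η i j z ∈ (B : Set (H →L[ℂ] H)) := hcov.1 i j z hzB
  have hklkr := C.inner_gen j i (y * star d) (mul_mem hy (star_mem hd)) 1 (one_mem _) 1
    (one_mem _) z (hBM hzB)
  rw [C.kr_one, LinearMap.id_apply, C.kl_one, LinearMap.id_apply] at hklkr
  rw [hklkr, C.inner_gen_gen hx hy hc hd, star_one, one_mul, mul_one, star_mul, star_star]
  calc V.τ (star y * η i j z * d)
      = V.τ (η i j z * (d * star y)) := by
        rw [mul_assoc, V.τ_trace _ (star_mem hy) _ (mul_mem (hBM hW) hd), mul_assoc]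
    _ = V.τ (η i j z * EB.E (d * star y)) := by
        rw [← EB.pres _ (mul_mem (hBM hW) hm)]
        simpa using congrArg V.τ (EB.bimod _ hW 1 (one_mem B) _ hm)
    _ = V.τ (z * η j i (EB.E (d * star y))) := hcov.2.1 i j z hzB _ (EB.mem _ hm)
    _ = V.τ (η j i (EB.E (d * star y)) * z) :=
        V.τ_trace _ (hBM hzB) _ (hcov.apply_condExp_mem hBM j i hm)

theorem EtaCorr.norm_inner_gen_gen_le (hcov : IsCovariance V (B : Set (H →L[ℂ] H)) EB η)
    (hBM : (B : Set (H →L[ℂ] H)) ⊆ V.M) {x y c d : H →L[ℂ] H} (hx : x ∈ V.M) (hy : y ∈ V.M)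
    (hc : c ∈ V.M) (hd : d ∈ V.M) (i j : I) :
    ‖⟪C.gen x i y, C.gen c j d⟫_ℂ‖ ≤
      ‖y * star d‖ * ‖C.e j‖ * (√‖η i i (EB.E 1)‖ * V.τNorm (EB.E (star x * c))) := by
  rw [C.inner_gen_gen_eq_inner_kl_kr hcov hBM hx hy hc hd]
  refine (norm_inner_le_norm _ _).trans (mul_le_mul (C.kl_bound _ (mul_mem hy (star_mem hd)) _)
    (C.norm_kr_e_le (hBM (EB.mem _ (mul_mem (star_mem hx) hc))) i
      (hcov.apply_condExp_mem hBM i i (one_mem _))) (norm_nonneg _) (by positivity))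

theorem EtaCorr.inner_gen_eq_of_central (hcov : IsCovariance V (B : Set (H →L[ℂ] H)) EB η)
    (hBM : (B : Set (H →L[ℂ] H)) ⊆ V.M) {u a b : H →L[ℂ] H} (hu : u ∈ V.M)
    (hu' : u * star u = 1) (ha : a ∈ V.M) (hb : b ∈ V.M) (i : I) {ζ : K}
    (hζ : C.kl (star u) ζ = C.kr (star u) ζ) :
    ⟪C.gen a i b, ζ⟫_ℂ = ⟪C.gen (star u * a) i (b * u), ζ⟫_ℂ := by
  have hζ' : C.kl u (C.kr (star u) ζ) = ζ := by
    rw [← hζ, ← LinearMap.comp_apply, ← C.kl_mul, hu', C.kl_one, LinearMap.id_apply]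
  calc ⟪C.gen a i b, ζ⟫_ℂ = ⟪C.gen a i b, C.kl u (C.kr (star u) ζ)⟫_ℂ := by rw [hζ']
    _ = ⟪C.gen (star u * a) i b, C.kr (star u) ζ⟫_ℂ := C.inner_gen_kl hu ha hb i _
    _ = ⟪C.gen (star u * a) i (b * u), ζ⟫_ℂ := by
        rw [C.inner_gen_kr (fun i j _ => hcov.apply_condExp_mem hBM i j) (star_mem hu)
          (mul_mem (star_mem hu) ha) hb, star_star]

theorem EtaCorr.tendsto_inner_gen_conj (hcov : IsCovariance V (B : Set (H →L[ℂ] H)) EB η)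
    (hBM : (B : Set (H →L[ℂ] H)) ⊆ V.M) {ι : Type} {l : Filter ι} {u : ι → H →L[ℂ] H}
    (hu : ∀ k, u k ∈ V.M) (hu₁ : ∀ k, ‖u k‖ ≤ 1)
    (hconv : ∀ x ∈ V.M, ∀ y ∈ V.M, Tendsto (fun k => V.τNorm (EB.E (x * u k * y))) l (𝓝 0))
    {a b : H →L[ℂ] H} (ha : a ∈ V.M) (hb : b ∈ V.M) (i : I) (ζ : K) :
    Tendsto (fun k => ⟪C.gen (star (u k) * a) i (b * u k), ζ⟫_ℂ) l (𝓝 0) := by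
  have hua : ∀ k, ‖star (u k) * a‖ ≤ ‖a‖ := fun k => (norm_mul_le _ _).trans
    (by rw [norm_star]; exact mul_le_of_le_one_left (norm_nonneg a) (hu₁ k))
  have hbu : ∀ k, ‖b * u k‖ ≤ ‖b‖ := fun k =>
    (norm_mul_le _ _).trans (mul_le_of_le_one_right (norm_nonneg b) (hu₁ k))
  refine tendsto_inner_of_dense_span C.dense_span (R := ‖a‖ * (‖b‖ * ‖C.e i‖))
    (fun k => (C.norm_gen_le (mul_mem (star_mem (hu k)) ha) (mul_mem hb (hu k)) i).trans ?_) ?_ ζ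
  · gcongr
    exacts [hua k, hbu k]
  · rintro _ ⟨j, c, d, hc, hd, rfl⟩
    have hlim := (hconv _ (star_mem ha) c hc).const_mul
      (‖b‖ * ‖star d‖ * ‖C.e j‖ * √‖η i i (EB.E 1)‖)
    rw [mul_zero] at hlim
    refine squeeze_zero_norm (fun k => (C.norm_inner_gen_gen_le hcov hBM
      (mul_mem (star_mem (hu k)) ha) (mul_mem hb (hu k)) hc hd i j).trans ?_) hlim
    calc ‖b * u k * star d‖ * ‖C.e j‖ *
          (√‖η i i (EB.E 1)‖ * V.τNorm (EB.E (star (star (u k) * a) * c)))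
        ≤ ‖b‖ * ‖star d‖ * ‖C.e j‖ * (√‖η i i (EB.E 1)‖ * V.τNorm (EB.E (star a * u k * c))) := by
          rw [star_mul, star_star]
          gcongr
          · exact mul_nonneg (Real.sqrt_nonneg _) (Real.sqrt_nonneg _)
          · exact (norm_mul_le (b * u k) (star d)).trans (by gcongr; exact hbu k)
      _ = _ := by ring

end Covariance

theorem statement15_general
    {H : Type} [NormedAddCommGroup H] [InnerProductSpace ℂ H] [CompleteSpace H]
    {I : Type}
    (V : TracialVN H) (B N : VonNeumannAlgebra H)
    (hBN : (B : Set (H →L[ℂ] H)) ⊆ (N : Set (H →L[ℂ] H)))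
    (hNM : (N : Set (H →L[ℂ] H)) ⊆ (V.M : Set (H →L[ℂ] H)))
    (EB : CondExpOn V (B : Set (H →L[ℂ] H)))
    (η : I → I → (H →L[ℂ] H) →ₗ[ℂ] (H →L[ℂ] H))
    (hcov : IsCovariance V (B : Set (H →L[ℂ] H)) EB η)
    {K : Type} [NormedAddCommGroup K] [InnerProductSpace ℂ K] [CompleteSpace K]
    (C : EtaCorr V I EB.E η K)
    -- `N ⊀_M B` :
    (hnot : ¬ PopaEmbeds V (V.M : Set (H →L[ℂ] H)) (N : Set (H →L[ℂ] H)) EB.E) :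
    ∀ ζ : K, (∀ y ∈ N, C.kl y ζ = C.kr y ζ) → ζ = 0 := by
  obtain ⟨ι, l, hl, u, hu, hconv⟩ := not_not.mp hnot
  have hBM : (B : Set (H →L[ℂ] H)) ⊆ V.M := hBN.trans hNM
  have huM : ∀ k, u k ∈ V.M := fun k => hNM (hu k).1
  have hu₁ : ∀ k, ‖u k‖ ≤ 1 := fun k =>
    ContinuousLinearMap.norm_le_one_of_star_mul_self_eq_one (hu k).2.1
  intro ζ hζ
  refine C.eq_zero_of_inner_gen fun i a ha b hb => tendsto_nhds_unique ?_
    (C.tendsto_inner_gen_conj hcov hBM huM hu₁ hconv ha hb i ζ)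
  exact tendsto_const_nhds.congr fun k => C.inner_gen_eq_of_central hcov hBM (huM k) (hu k).2.2
    ha hb i (hζ _ (star_mem (hu k).1))

theorem statement15
    {H : Type} [NormedAddCommGroup H] [InnerProductSpace ℂ H] [CompleteSpace H]
    {I : Type} [Countable I]
    (V : TracialVN H) (B N : VonNeumannAlgebra H)
    (hBN : (B : Set (H →L[ℂ] H)) ⊆ (N : Set (H →L[ℂ] H)))
    (hNM : (N : Set (H →L[ℂ] H)) ⊆ (V.M : Set (H →L[ℂ] H)))
    (EB : CondExpOn V (B : Set (H →L[ℂ] H)))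
    (η : I → I → (H →L[ℂ] H) →ₗ[ℂ] (H →L[ℂ] H))
    (hcov : IsCovariance V (B : Set (H →L[ℂ] H)) EB η)
    {K : Type} [NormedAddCommGroup K] [InnerProductSpace ℂ K] [CompleteSpace K]
    (C : EtaCorr V I EB.E η K)
    -- `N ⊀_M B` :
    (hnot : ¬ PopaEmbeds V (V.M : Set (H →L[ℂ] H)) (N : Set (H →L[ℂ] H)) EB.E) :
    ∀ ζ : K, (∀ y ∈ N, C.kl y ζ = C.kr y ζ) → ζ = 0 :=
  statement15_general V B N hBN hNM EB η hcov C hnot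
end
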